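/- arXiv:math/9811185 — 14 statements merged into one kernel-verified Lean document; each statement's English description precedes it below -/
import Mathlib

section
/- Fix an integer k ≥ 2. Every positive integer n has a divisor d with d ≤ n^(1/k) such that τ(n) ≤ (2·τ(d))^(k·log k / log 2), where τ is the number-of-divisors function. -/
open Finset

lemma sel_aux (k : ℕ) (hk : 1 ≤ k) (f : ℕ → ℕ) (B : Finset ℕ) (hf : ∀ q ∈ B, 1 ≤ f q) :
    ∃ S ⊆ B, (∏ q ∈ S, f q) ^ k ≤ ∏ q ∈ B, f q ∧ B.card ≤ k * S.card + (k - 1) := by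
  induction B using Finset.strongInduction with
  | _ B ih =>
  by_cases hB : B.card ≤ k - 1
  · exact ⟨∅, Finset.empty_subset _, by simpa using Finset.one_le_prod' hf, by simpa using hB⟩
  · push_neg at hB
    have hcard : k ≤ B.card := by omega
    have hne : B.Nonempty := Finset.card_pos.mp (by omega)
    obtain ⟨x, hxB, hxmin⟩ := Finset.exists_min_image B f hne
    obtain ⟨T, hxT, hTB, hTcard⟩ := Finset.exists_subsuperset_card_eq
      (by simpa using hxB : {x} ⊆ B) (by simpa using hk) hcard
    have hxT' : x ∈ T := hxT (Finset.mem_singleton_self x)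
    have hss : B \ T ⊂ B := Finset.sdiff_ssubset hTB ⟨x, hxT'⟩
    obtain ⟨S', hS'sub, hS'prod, hS'card⟩ := ih (B \ T) hss
      (fun q hq => hf q (Finset.mem_sdiff.mp hq).1)
    have hxS' : x ∉ S' := fun h => (Finset.mem_sdiff.mp (hS'sub h)).2 hxT'
    refine ⟨insert x S', ?_, ?_, ?_⟩
    · exact Finset.insert_subset hxB (hS'sub.trans (Finset.sdiff_subset))
    · rw [Finset.prod_insert hxS', mul_pow]
      have h1 : f x ^ k ≤ ∏ q ∈ T, f q := by
        calc f x ^ k = ∏ _q ∈ T, f x := by rw [Finset.prod_const, hTcard]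
        _ ≤ ∏ q ∈ T, f q :=
          Finset.prod_le_prod (fun _ _ => Nat.zero_le _) (fun q hq => hxmin q (hTB hq))
      calc f x ^ k * (∏ q ∈ S', f q) ^ k ≤ (∏ q ∈ T, f q) * ∏ q ∈ B \ T, f q :=
            Nat.mul_le_mul h1 hS'prod
        _ = ∏ q ∈ B, f q := by rw [mul_comm, Finset.prod_sdiff hTB]
    · have h1 : (B \ T).card = B.card - T.card := Finset.card_sdiff_of_subset hTB
      have h2 := Finset.card_le_card hTB
      rw [Finset.card_insert_of_notMem hxS', Nat.mul_succ]
      omega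

lemma tau_prod_aux (b : ℕ → ℕ) (P : Finset ℕ) :
    (∀ p ∈ P, p.Prime) → (∏ p ∈ P, p ^ b p).divisors.card = ∏ p ∈ P, (b p + 1) := by
  induction P using Finset.induction_on with
  | empty => intro _; simp
  | @insert p P hpP ih =>
    intro hP
    have hp := hP p (Finset.mem_insert_self p P)
    have hcop : (p ^ b p).Coprime (∏ q ∈ P, q ^ b q) := by
      apply Nat.Coprime.pow_left
      apply Nat.Coprime.prod_right
      intro q hq
      exact Nat.Coprime.pow_right _
        ((Nat.coprime_primes hp (hP q (Finset.mem_insert_of_mem hq))).mpr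
          (by rintro rfl; exact hpP hq))
    rw [Finset.prod_insert hpP, Finset.prod_insert hpP, hcop.card_divisors_mul,
      ih (fun q hq => hP q (Finset.mem_insert_of_mem hq))]
    congr 1
    rw [Nat.divisors_prime_pow hp, Finset.card_map, Finset.card_range]

lemma key_exp_facts (k : ℕ) (hk : 2 ≤ k) :
    1 + Real.log k / Real.log 2 ≤ (k * Real.log k) / Real.log 2 ∧
    (2:ℝ) ^ ((k * Real.log k) / Real.log 2) = (k:ℝ) ^ (k:ℕ) := by
  have hlog2 : (0:ℝ) < Real.log 2 := Real.log_pos (by norm_num)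
  have hk2 : (2:ℝ) ≤ (k:ℝ) := by exact_mod_cast hk
  have hkpos : (0:ℝ) < k := by linarith
  have hlogk : Real.log 2 ≤ Real.log k := Real.log_le_log (by norm_num) hk2
  have hL : 1 ≤ Real.log k / Real.log 2 := (le_div_iff₀ hlog2).mpr (by linarith)
  constructor
  · have : (k * Real.log k) / Real.log 2 = k * (Real.log k / Real.log 2) := by ring
    rw [this]
    nlinarith [hL, hk2]
  · rw [← Real.rpow_natCast (k:ℝ) k, Real.rpow_def_of_pos (by norm_num : (0:ℝ) < 2),
      Real.rpow_def_of_pos hkpos]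
    congr 1
    field_simp

lemma ptwise (k : ℕ) (hk : 2 ≤ k) (m : ℕ) (hkm : k ≤ m) :
    ((m + 1 : ℕ):ℝ) ≤ ((m / k + 1 : ℕ):ℝ) ^ ((k * Real.log k) / Real.log 2) := by
  obtain ⟨hK1, -⟩ := key_exp_facts k hk
  set K := (k * Real.log k) / Real.log 2 with hKdef
  have hlog2 : (0:ℝ) < Real.log 2 := Real.log_pos (by norm_num)
  have hk2 : (2:ℝ) ≤ (k:ℝ) := by exact_mod_cast hk
  have hkpos : (0:ℝ) < k := by linarith
  have hL : 1 ≤ Real.log k / Real.log 2 :=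
    (le_div_iff₀ hlog2).mpr (by linarith [Real.log_le_log (by norm_num : (0:ℝ) < 2) hk2])
  have hKm1 : Real.log k / Real.log 2 ≤ K - 1 := by linarith
  have hK1' : (0:ℝ) ≤ K - 1 := by linarith
  set b := m / k with hbdef
  have hb1 : 1 ≤ b := (Nat.one_le_div_iff (by omega)).mpr hkm
  have hnat : m + 1 ≤ k * (b + 1) := by
    have h1 := Nat.div_add_mod m k
    have h2 : m % k < k := Nat.mod_lt m (by omega)
    have h3 : k * (b + 1) = k * b + k := by ring
    rw [h3, hbdef]
    omega
  have h2b : (2:ℝ) ≤ (b:ℝ) + 1 := by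
    have : (1:ℝ) ≤ (b:ℝ) := by exact_mod_cast hb1
    linarith
  have hbpos : (0:ℝ) < (b:ℝ) + 1 := by linarith
  have hkle : (k:ℝ) ≤ (2:ℝ) ^ (K - 1) := by
    have e1 : (2:ℝ) ^ (Real.log k / Real.log 2) = k := by
      have := Real.rpow_logb (by norm_num : (0:ℝ) < 2) (by norm_num) hkpos
      rwa [Real.logb] at this
    calc (k:ℝ) = (2:ℝ) ^ (Real.log k / Real.log 2) := e1.symm
      _ ≤ (2:ℝ) ^ (K - 1) :=
        Real.rpow_le_rpow_of_exponent_le (by norm_num) hKm1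
  calc ((m + 1 : ℕ):ℝ) ≤ (k:ℝ) * ((b:ℝ) + 1) := by
        push_cast
        exact_mod_cast (by exact_mod_cast hnat : ((m+1:ℕ):ℝ) ≤ ((k*(b+1):ℕ):ℝ))
    _ ≤ (2:ℝ) ^ (K - 1) * ((b:ℝ) + 1) := by
        apply mul_le_mul_of_nonneg_right hkle (by linarith)
    _ ≤ (((b:ℝ) + 1)) ^ (K - 1) * ((b:ℝ) + 1) := by
        apply mul_le_mul_of_nonneg_right _ (by linarith)
        exact Real.rpow_le_rpow (by norm_num) h2b hK1'
    _ = ((b:ℝ) + 1) ^ K := by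
        rw [← Real.rpow_add_one hbpos.ne']
        ring_nf
    _ = ((b + 1 : ℕ):ℝ) ^ K := by push_cast; ring_nf

/-- Fix `k ≥ 2`. Every positive integer `n` has a divisor `d ≤ n^(1/k)` with
`τ(n) ≤ (2 τ(d))^(k log k / log 2)`. -/
theorem stmt0 (k : ℕ) (hk : 2 ≤ k) (n : ℕ) (hn : 0 < n) :
    ∃ d : ℕ, d ∣ n ∧ (d : ℝ) ≤ (n : ℝ) ^ ((1 : ℝ) / k) ∧
      (n.divisors.card : ℝ) ≤
        ((2 * d.divisors.card : ℕ) : ℝ) ^ ((k * Real.log k) / Real.log 2) := by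
  classical
  obtain ⟨hK1, h2K⟩ := key_exp_facts k hk
  set K := (k * Real.log k) / Real.log 2 with hKdef
  have hlog2 : (0:ℝ) < Real.log 2 := Real.log_pos (by norm_num)
  have hlogk : (0:ℝ) ≤ Real.log k :=
    Real.log_nonneg (by exact_mod_cast Nat.one_le_of_lt hk)
  have hKpos : (0:ℝ) ≤ K := by
    rw [hKdef]
    exact div_nonneg (mul_nonneg (Nat.cast_nonneg k) hlogk) hlog2.le
  have hn0 : n ≠ 0 := hn.ne'
  set a : ℕ → ℕ := fun p => n.factorization p with ha
  set P := n.primeFactors with hPdef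
  have hprime : ∀ p ∈ P, p.Prime := fun p hp => Nat.prime_of_mem_primeFactors hp
  have hapos : ∀ p ∈ P, 1 ≤ a p := by
    intro p hp
    have hp' : n.factorization p ≠ 0 := by
      rw [hPdef, ← Nat.support_factorization] at hp
      exact Finsupp.mem_support_iff.mp hp
    simp only [ha]
    omega
  have hnprod : ∏ p ∈ P, p ^ a p = n := by
    conv_rhs => rw [← Nat.factorization_prod_pow_eq_self hn0]
    rfl
  set A := P.filter (fun p => k ≤ a p) with hAdef
  set B := P.filter (fun p => ¬ k ≤ a p) with hBdef
  have hBP : B ⊆ P := Finset.filter_subset _ _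
  obtain ⟨S, hSB, hSprod, hScard⟩ := sel_aux k (by omega) (fun q => q ^ a q) B
    (fun q hq => Nat.one_le_iff_ne_zero.mpr (pow_ne_zero _ (hprime q (hBP hq)).pos.ne'))
  set b : ℕ → ℕ := fun p => if k ≤ a p then a p / k else if p ∈ S then a p else 0 with hbdef
  have hble : ∀ p, b p ≤ a p := by
    intro p
    simp only [hbdef]
    split_ifs
    · exact Nat.div_le_self _ _
    · exact le_rfl
    · exact Nat.zero_le _
  set d := ∏ p ∈ P, p ^ b p with hddef
  have hbA : ∀ p ∈ A, b p = a p / k := by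
    intro p hp
    have := (Finset.mem_filter.mp hp).2
    simp only [hbdef, if_pos this]
  have hbS : ∀ p ∈ S, b p = a p := by
    intro p hp
    have h1 := (Finset.mem_filter.mp (hSB hp)).2
    simp only [hbdef, if_neg h1, if_pos hp]
  have hbB0 : ∀ p ∈ B, p ∉ S → b p = 0 := by
    intro p hp hps
    have h1 := (Finset.mem_filter.mp hp).2
    simp only [hbdef, if_neg h1, if_neg hps]
  -- d ∣ n
  have hdvd : d ∣ n := by
    rw [hddef, ← hnprod]
    exact Finset.prod_dvd_prod_of_dvd _ _ (fun p _ => pow_dvd_pow p (hble p))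
  -- split d
  have hdsplit : d = (∏ p ∈ A, p ^ b p) * (∏ p ∈ B, p ^ b p) :=
    (Finset.prod_filter_mul_prod_filter_not P _ _).symm
  have hBSprod : ∏ p ∈ B, p ^ b p = ∏ p ∈ S, p ^ a p := by
    rw [← Finset.prod_subset hSB (fun p hp hps => by rw [hbB0 p hp hps, pow_zero])]
    exact Finset.prod_congr rfl (fun p hp => by rw [hbS p hp])
  have hBStau : ∏ p ∈ B, (b p + 1) = ∏ p ∈ S, (a p + 1) := by
    rw [← Finset.prod_subset hSB (fun p hp hps => by simp [hbB0 p hp hps])]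
    exact Finset.prod_congr rfl (fun p hp => by rw [hbS p hp])
  -- d ^ k ≤ n
  have hdk : d ^ k ≤ n := by
    rw [hdsplit, mul_pow]
    have h1 : (∏ p ∈ A, p ^ b p) ^ k ≤ ∏ p ∈ A, p ^ a p := by
      rw [← Finset.prod_pow]
      apply Finset.prod_le_prod (fun _ _ => Nat.zero_le _)
      intro p hp
      rw [← pow_mul, hbA p hp]
      exact Nat.pow_le_pow_right (hprime p (Finset.mem_filter.mp hp).1).pos
        (Nat.div_mul_le_self _ _)
    have h2 : (∏ p ∈ B, p ^ b p) ^ k ≤ ∏ p ∈ B, p ^ a p := by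
      rw [hBSprod]; exact hSprod
    calc (∏ p ∈ A, p ^ b p) ^ k * (∏ p ∈ B, p ^ b p) ^ k
        ≤ (∏ p ∈ A, p ^ a p) * (∏ p ∈ B, p ^ a p) := Nat.mul_le_mul h1 h2
      _ = ∏ p ∈ P, p ^ a p := Finset.prod_filter_mul_prod_filter_not P _ _
      _ = n := hnprod
  -- tau d
  have htaud : d.divisors.card = (∏ p ∈ A, (b p + 1)) * (∏ p ∈ S, (a p + 1)) := by
    rw [hddef, tau_prod_aux b P hprime, ← Finset.prod_filter_mul_prod_filter_not P (fun p => k ≤ a p), hBStau]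
  have htaun : n.divisors.card = (∏ p ∈ A, (a p + 1)) * (∏ p ∈ B, (a p + 1)) := by
    rw [Nat.card_divisors hn0, ← Finset.prod_filter_mul_prod_filter_not P (fun p => k ≤ a p)]
  refine ⟨d, hdvd, ?_, ?_⟩
  -- size bound
  · have hd0 : (0:ℝ) ≤ (d:ℝ) := Nat.cast_nonneg d
    have hkR : (0:ℝ) < (k:ℝ) := by positivity
    have h1 : ((d:ℝ) ^ (k:ℕ)) ≤ (n:ℝ) := by exact_mod_cast hdk
    have h2 : (d:ℝ) = ((d:ℝ) ^ (k:ℕ)) ^ ((1:ℝ)/k) := by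
      rw [← Real.rpow_natCast (d:ℝ) k, ← Real.rpow_mul hd0]
      rw [mul_one_div, div_self hkR.ne', Real.rpow_one]
    rw [h2]
    exact Real.rpow_le_rpow (by positivity) h1 (by positivity)
  -- divisor bound
  · -- A part
    have hAR : (∏ p ∈ A, ((a p + 1 : ℕ):ℝ)) ≤ ((∏ p ∈ A, (b p + 1) : ℕ):ℝ) ^ K := by
      calc (∏ p ∈ A, ((a p + 1 : ℕ):ℝ))
          ≤ ∏ p ∈ A, ((b p + 1 : ℕ):ℝ) ^ K := by
            apply Finset.prod_le_prod (fun p _ => by positivity)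
            intro p hp
            rw [hbA p hp]
            exact ptwise k hk (a p) (Finset.mem_filter.mp hp).2
        _ = (∏ p ∈ A, ((b p + 1 : ℕ):ℝ)) ^ K :=
            Real.finset_prod_rpow A _ (fun p _ => by positivity) K
        _ = ((∏ p ∈ A, (b p + 1) : ℕ):ℝ) ^ K := by rw [Nat.cast_prod]
    -- B part
    have hBnat : ∏ p ∈ B, (a p + 1) ≤ k ^ B.card := by
      calc ∏ p ∈ B, (a p + 1) ≤ ∏ _p ∈ B, k := by
            apply Finset.prod_le_prod (fun _ _ => Nat.zero_le _)
            intro p hp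
            have := (Finset.mem_filter.mp hp).2
            omega
        _ = k ^ B.card := Finset.prod_const k
    have hSnat : 2 ^ S.card ≤ ∏ p ∈ S, (a p + 1) := by
      calc 2 ^ S.card = ∏ _p ∈ S, 2 := (Finset.prod_const 2).symm
        _ ≤ ∏ p ∈ S, (a p + 1) := by
            apply Finset.prod_le_prod (fun _ _ => Nat.zero_le _)
            intro p hp
            have := hapos p (hBP (hSB hp))
            omega
    have hcard2 : B.card ≤ k * (S.card + 1) := by
      have : k * (S.card + 1) = k * S.card + k := by ring
      omega
    have hBR : (∏ p ∈ B, ((a p + 1 : ℕ):ℝ)) ≤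
        (2:ℝ) ^ K * ((∏ p ∈ S, (a p + 1) : ℕ):ℝ) ^ K := by
      have hc1 : (∏ p ∈ B, ((a p + 1 : ℕ):ℝ)) ≤ (k:ℝ) ^ B.card := by
        rw [← Nat.cast_prod]
        exact_mod_cast hBnat
      have hc2 : (k:ℝ) ^ B.card ≤ (k:ℝ) ^ (k * (S.card + 1)) :=
        pow_le_pow_right₀ (by exact_mod_cast Nat.one_le_of_lt hk) hcard2
      have hc3 : (k:ℝ) ^ (k * (S.card + 1)) = ((2:ℝ) ^ K) ^ (S.card + 1) := by
        rw [pow_mul, h2K]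
      have hc4 : ((2:ℝ) ^ K) ^ (S.card + 1) = (2:ℝ) ^ K * ((2:ℝ) ^ (S.card : ℕ)) ^ K := by
        rw [← Real.rpow_natCast ((2:ℝ) ^ K) (S.card + 1), ← Real.rpow_mul (by norm_num)]
        rw [← Real.rpow_natCast (2:ℝ) S.card, ← Real.rpow_mul (by norm_num)]
        rw [← Real.rpow_add (by norm_num : (0:ℝ) < 2)]
        congr 1
        push_cast
        ring
      have hc5 : ((2:ℝ) ^ (S.card : ℕ)) ^ K ≤ ((∏ p ∈ S, (a p + 1) : ℕ):ℝ) ^ K := by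
        apply Real.rpow_le_rpow (by positivity) _ hKpos
        exact_mod_cast hSnat
      calc (∏ p ∈ B, ((a p + 1 : ℕ):ℝ)) ≤ (k:ℝ) ^ B.card := hc1
        _ ≤ (k:ℝ) ^ (k * (S.card + 1)) := hc2
        _ = (2:ℝ) ^ K * ((2:ℝ) ^ (S.card : ℕ)) ^ K := by rw [hc3, hc4]
        _ ≤ (2:ℝ) ^ K * ((∏ p ∈ S, (a p + 1) : ℕ):ℝ) ^ K :=
            mul_le_mul_of_nonneg_left hc5 (by positivity)
    -- combine
    have hrhs : ((2 * d.divisors.card : ℕ):ℝ) ^ K =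
        ((∏ p ∈ A, (b p + 1) : ℕ):ℝ) ^ K * ((2:ℝ) ^ K * ((∏ p ∈ S, (a p + 1) : ℕ):ℝ) ^ K) := by
      rw [htaud]
      push_cast
      rw [← Real.mul_rpow (by positivity) (by positivity),
        ← Real.mul_rpow (by positivity) (by positivity)]
      congr 1
      ring
    rw [htaun, hrhs, Nat.cast_mul, Nat.cast_prod, Nat.cast_prod]
    exact mul_le_mul hAR hBR (Finset.prod_nonneg fun _ _ => by positivity) (by positivity)
end

section
/- Fix an integer k ≥ 2. Every squarefree positive integer n has a divisor d with d ≤ n^(1/k) such that τ(n) ≤ (2·τ(d))^k. -/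
/-!
Write `n = p₁ p₂ ⋯ p_r` with `p₁ < p₂ < ⋯ < p_r`, so that `τ(n) = 2^r`. Cut the primes into
`m = ⌊r/k⌋` consecutive blocks of length `k`, leaving fewer than `k` primes over, and let `d` be
the product of the smallest prime of each block. The `k`-th power of such a prime is at most the
product of its block, so `d^k ≤ n`; and `r < k (m + 1)` gives
`τ(n) = 2^r ≤ (2 · 2^m)^k = (2 τ(d))^k`.
-/

open Finset

theorem List.exists_sublist_pow_prod_le_prod {M : Type*} [CommMonoid M] [Preorder M]
    [MulLeftMono M] {k : ℕ} (hk : 0 < k) (L : List M) (one_le : ∀ x ∈ L, 1 ≤ x)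
    (sorted : L.Pairwise (· ≤ ·)) :
    ∃ S : List M, S.Sublist L ∧ S.prod ^ k ≤ L.prod ∧ L.length < k * (S.length + 1) := by
  rcases lt_or_ge L.length k with hshort | hlong
  · exact ⟨[], nil_sublist L, by simpa using one_le_prod_of_one_le one_le, by simpa⟩
  obtain ⟨p, rest, rfl⟩ := exists_cons_of_length_pos (hk.trans_le hlong)
  rw [length_cons] at hlong
  obtain ⟨p_le, rest_sorted⟩ := pairwise_cons.mp sorted
  have one_le_rest : ∀ x ∈ rest, 1 ≤ x := fun x hx => one_le x (mem_cons_of_mem p hx)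
  have hdrop : (rest.drop (k - 1)).Sublist rest := drop_sublist _ _
  obtain ⟨S, hS, hprod, hlen⟩ := exists_sublist_pow_prod_le_prod hk (rest.drop (k - 1))
    (fun x hx => one_le_rest x (hdrop.mem hx)) (rest_sorted.sublist hdrop)
  refine ⟨p :: S, (hS.trans hdrop).cons_cons p, ?_, ?_⟩
  · have hblock : p ^ (k - 1) ≤ (rest.take (k - 1)).prod := by
      simpa [length_take_of_le (show k - 1 ≤ rest.length by omega)] using
        pow_card_le_prod (rest.take (k - 1)) p fun x hx => p_le x (mem_of_mem_take hx)
    calc (p :: S).prod ^ k = p * p ^ (k - 1) * S.prod ^ k := by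
          rw [prod_cons, mul_pow, ← pow_succ', Nat.sub_add_cancel hk]
      _ ≤ p * (rest.take (k - 1)).prod * (rest.drop (k - 1)).prod := by gcongr
      _ = (p :: rest).prod := by rw [mul_assoc, prod_take_mul_prod_drop, prod_cons]
  · simp only [length_cons, length_drop] at hlen ⊢
    rw [Nat.mul_add_one]; omega
termination_by L.length
decreasing_by subst_vars; simp

theorem Nat.card_divisors_prod_of_nodup {S : List ℕ} (nodup : S.Nodup)
    (prime : ∀ p ∈ S, p.Prime) : #S.prod.divisors = 2 ^ S.length := by
  induction S with
  | nil => simp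
  | cons p S ih =>
    obtain ⟨hpS, hS⟩ := List.nodup_cons.mp nodup
    obtain ⟨hp, hSprime⟩ := List.forall_mem_cons.mp prime
    have hcop : p.Coprime S.prod := Nat.coprime_list_prod_right_iff.mpr fun q hq =>
      (Nat.coprime_primes hp (hSprime q hq)).mpr (ne_of_mem_of_not_mem hq hpS).symm
    rw [List.prod_cons, hcop.card_divisors_mul, ih hS hSprime, hp.divisors,
      card_pair hp.one_lt.ne, List.length_cons, pow_succ']

theorem stmt1_general (k : ℕ) (hk : 2 ≤ k) (n : ℕ) (hsq : Squarefree n) :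
    ∃ d : ℕ, d ∣ n ∧ (d : ℝ) ≤ (n : ℝ) ^ ((1 : ℝ) / k) ∧
      n.divisors.card ≤ (2 * d.divisors.card) ^ k := by
  have hprod : n.primeFactorsList.prod = n := Nat.prod_primeFactorsList hsq.ne_zero
  have hprime : ∀ p ∈ n.primeFactorsList, p.Prime :=
    fun _ => Nat.prime_of_mem_primeFactorsList
  obtain ⟨S, hS, hpow, hlen⟩ :=
    n.primeFactorsList.exists_sublist_pow_prod_le_prod (by omega : 0 < k)
      (fun p hp => (hprime p hp).one_lt.le) (Nat.primeFactorsList_sorted n).pairwise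
  rw [hprod] at hpow
  refine ⟨S.prod, hprod ▸ hS.prod_dvd_prod, ?_, ?_⟩
  · rw [one_div, Real.le_rpow_inv_iff_of_pos (by positivity) (by positivity) (by positivity),
      Real.rpow_natCast]
    exact_mod_cast hpow
  · rw [← hprod, Nat.card_divisors_prod_of_nodup hsq.nodup_primeFactorsList hprime,
      Nat.card_divisors_prod_of_nodup (hsq.nodup_primeFactorsList.sublist hS)
        fun p hp => hprime p (hS.mem hp), ← pow_succ', ← pow_mul]
    exact Nat.pow_le_pow_right two_pos (by linarith)

/-- Fix `k ≥ 2`. Every squarefree positive integer `n` has a divisor `d ≤ n^(1/k)` with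
`τ(n) ≤ (2 τ(d))^k`. -/
theorem stmt1 (k : ℕ) (hk : 2 ≤ k) (n : ℕ) (hn : 0 < n) (hsq : Squarefree n) :
    ∃ d : ℕ, d ∣ n ∧ (d : ℝ) ≤ (n : ℝ) ^ ((1 : ℝ) / k) ∧
      n.divisors.card ≤ (2 * d.divisors.card) ^ k :=
  stmt1_general k hk n hsq
end

section
/- For every positive integer n, τ₃(n)² ≤ Σ_{d|n} τ(n/d)²/τ(d) · Σ_{d|n, d ≤ n^(1/3)} 9·τ(d) is implied by: τ₃(n) ≤ 3 · Σ_{d | n, d ≤ n^(1/3)} τ(n/d), where τ₃ is the 3-fold divisor function. Prove this latter inequality. -/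
/-!
In every ordered factorization `n = a₁ ⋯ aₖ` the smallest factor satisfies `aᵢ ^ k ≤ n`. Hence
the factorizations are covered by the `k` sets on which a prescribed coordinate is such a small
divisor. Permuting coordinates, each of these sets is as large as the one for the first
coordinate, which has `∑_{a ∣ n, a ^ k ≤ n} τₖ₋₁(n / a)` elements.
-/

/-- The triple divisor function `τ₃(n) = #{(a,b,c) : abc = n}`,
written as `∑_{d ∣ n} τ(n/d)`. -/
def tau3 (n : ℕ) : ℕ := ∑ d ∈ n.divisors, (n / d).divisors.card

open Finset

lemma Finset.exists_pow_card_le_prod {ι M : Type*} [CommMonoid M] [LinearOrder M]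
    [MulLeftMono M] {s : Finset ι} (hs : s.Nonempty) (f : ι → M) :
    ∃ i ∈ s, f i ^ #s ≤ ∏ j ∈ s, f j := by
  obtain ⟨i, hi, hmin⟩ := s.exists_min_image f hs
  exact ⟨i, hi, pow_card_le_prod s f (f i) hmin⟩

namespace Nat

lemma card_divisorsAntidiagonal (n : ℕ) : #n.divisorsAntidiagonal = #n.divisors := by
  rw [← map_div_right_divisors, card_map]

lemma card_finMulAntidiag_two (n : ℕ) : #(finMulAntidiag 2 n) = #n.divisors := by
  rw [← card_divisorsAntidiagonal, ← image_piFinTwoEquiv_finMulAntidiag,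
    Finset.card_image_of_injective _ (Equiv.injective _)]

lemma mem_divisors_of_mem_finMulAntidiag {d n : ℕ} {f : Fin d → ℕ}
    (hf : f ∈ finMulAntidiag d n) (i : Fin d) : f i ∈ n.divisors :=
  mem_divisors.2 ⟨dvd_of_mem_finMulAntidiag hf i, (mem_finMulAntidiag.1 hf).2⟩

lemma card_filter_finMulAntidiag_apply_comm {d n : ℕ} (i j : Fin d) (p : ℕ → Prop)
    [DecidablePred p] :
    #{f ∈ finMulAntidiag d n | p (f i)} = #{f ∈ finMulAntidiag d n | p (f j)} := by
  refine card_nbij' (· ∘ Equiv.swap i j) (· ∘ Equiv.swap i j) ?_ ?_ ?_ ?_ <;>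
  · intro f hf
    simp_all [Function.comp_def, Equiv.prod_comp]

lemma card_filter_finMulAntidiag_apply_zero_eq {d n a : ℕ} (ha : a ∣ n) :
    #{f ∈ finMulAntidiag (d + 1) n | f 0 = a} = #(finMulAntidiag d (n / a)) := by
  obtain ⟨b, rfl⟩ := ha
  rcases eq_or_ne a 0 with rfl | ha
  · simp
  rw [Nat.mul_div_cancel_left b (Nat.pos_of_ne_zero ha)]
  refine card_nbij' Fin.tail (fun g => Fin.cons a g : (Fin d → ℕ) → Fin (d + 1) → ℕ)
    ?_ ?_ ?_ ?_
  · intro f hf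
    simp only [coe_filter, Set.mem_ofPred_eq, mem_finMulAntidiag, Fin.prod_univ_succ] at hf
    obtain ⟨⟨hprod, hb⟩, rfl⟩ := hf
    exact mem_finMulAntidiag.2
      ⟨Nat.eq_of_mul_eq_mul_left (Nat.pos_of_ne_zero ha) hprod, right_ne_zero_of_mul hb⟩
  · intro g hg
    simp_all [Fin.prod_univ_succ]
  · intro f hf
    obtain ⟨-, rfl⟩ := mem_filter.1 hf
    exact Fin.cons_self_tail f
  · intro g _
    simp

lemma card_filter_finMulAntidiag_apply_zero_mem {d n : ℕ} {s : Finset ℕ}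
    (hs : s ⊆ n.divisors) :
    #{f ∈ finMulAntidiag (d + 1) n | f 0 ∈ s} = ∑ a ∈ s, #(finMulAntidiag d (n / a)) := by
  rw [card_eq_sum_card_fiberwise (s := {f ∈ finMulAntidiag (d + 1) n | f 0 ∈ s})
    (f := fun g => g 0) (t := s) (fun f hf => (mem_filter.1 hf).2)]
  refine sum_congr rfl fun a ha => ?_
  rw [filter_filter, ← card_filter_finMulAntidiag_apply_zero_eq (mem_divisors.1 (hs ha)).1]
  congr 1
  refine filter_congr fun f _ => ⟨And.right, ?_⟩
  rintro rfl
  exact ⟨ha, rfl⟩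

lemma card_finMulAntidiag_succ (d n : ℕ) :
    #(finMulAntidiag (d + 1) n) = ∑ a ∈ n.divisors, #(finMulAntidiag d (n / a)) := by
  rw [← card_filter_finMulAntidiag_apply_zero_mem subset_rfl, filter_true_of_mem]
  exact fun f hf => mem_divisors_of_mem_finMulAntidiag hf 0

theorem card_finMulAntidiag_succ_le (d n : ℕ) :
    #(finMulAntidiag (d + 1) n) ≤
      (d + 1) * ∑ a ∈ n.divisors with a ^ (d + 1) ≤ n, #(finMulAntidiag d (n / a)) := by
  set small := {a ∈ n.divisors | a ^ (d + 1) ≤ n}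
  have hcover : finMulAntidiag (d + 1) n ⊆
      univ.biUnion fun i => {f ∈ finMulAntidiag (d + 1) n | f i ∈ small} := by
    intro f hf
    obtain ⟨i, -, hi⟩ := univ.exists_pow_card_le_prod univ_nonempty f
    rw [Finset.card_univ, Fintype.card_fin, prod_eq_of_mem_finMulAntidiag hf] at hi
    exact mem_biUnion.2 ⟨i, mem_univ _,
      mem_filter.2 ⟨hf, mem_filter.2 ⟨mem_divisors_of_mem_finMulAntidiag hf i, hi⟩⟩⟩
  calc #(finMulAntidiag (d + 1) n)
      ≤ #(univ : Finset (Fin (d + 1))) * #{f ∈ finMulAntidiag (d + 1) n | f 0 ∈ small} :=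
        (card_le_card hcover).trans <| card_biUnion_le_card_mul _ _ _ fun i _ =>
          (card_filter_finMulAntidiag_apply_comm i 0 (· ∈ small)).le
    _ = (d + 1) * ∑ a ∈ small, #(finMulAntidiag d (n / a)) := by
      rw [Finset.card_univ, Fintype.card_fin,
        card_filter_finMulAntidiag_apply_zero_mem (filter_subset _ _)]

end Nat

theorem tau3_eq_card_finMulAntidiag (n : ℕ) : tau3 n = #(Nat.finMulAntidiag 3 n) := by
  simp only [tau3, Nat.card_finMulAntidiag_succ 2, Nat.card_finMulAntidiag_two]

theorem stmt3_general (n : ℕ) :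
    tau3 n ≤ 3 * ∑ d ∈ n.divisors.filter (fun d => d ^ 3 ≤ n), (n / d).divisors.card := by
  simpa only [tau3_eq_card_finMulAntidiag, Nat.card_finMulAntidiag_two] using
    Nat.card_finMulAntidiag_succ_le 2 n

/-- For every positive integer `n`, `τ₃(n) ≤ 3 ∑_{d ∣ n, d ≤ n^(1/3)} τ(n/d)`. -/
theorem stmt3 (n : ℕ) (hn : 0 < n) :
    tau3 n ≤ 3 * ∑ d ∈ n.divisors.filter (fun d => d ^ 3 ≤ n), (n / d).divisors.card :=
  stmt3_general n
end

section
/- For every positive integer n, τ(n) · Σ_{d|n} τ(n/d)²/τ(d) ≤ τ₃(n)². -/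
open ArithmeticFunction Finset in
lemma gauss_aux (m : ℕ) : 2 * ∑ i ∈ Finset.range m, (i + 1) = m * (m + 1) := by
  induction m with
  | zero => simp
  | succ k ih => rw [Finset.sum_range_succ, Nat.mul_add, ih]; ring

lemma sum_cube_aux (m : ℕ) :
    ∑ i ∈ Finset.range m, (i + 1) ^ 3 = (∑ i ∈ Finset.range m, (i + 1)) ^ 2 := by
  induction m with
  | zero => simp
  | succ k ih =>
      rw [Finset.sum_range_succ, Finset.sum_range_succ, ih]
      have h := gauss_aux k
      nlinarith [h]

open ArithmeticFunction ArithmeticFunction.zeta ArithmeticFunction.sigma in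
lemma liouville_aux (n : ℕ) (hn : n ≠ 0) :
    ∑ d ∈ n.divisors, d.divisors.card ^ 3 = (∑ d ∈ n.divisors, d.divisors.card) ^ 2 := by
  have key : (ζ * ((σ 0).pmul ((σ 0).pmul (σ 0)))) = ((ζ * σ 0).pmul (ζ * σ 0)) := by
    rw [ArithmeticFunction.IsMultiplicative.eq_iff_eq_on_prime_powers _
      (isMultiplicative_zeta.mul (isMultiplicative_sigma.pmul
        (isMultiplicative_sigma.pmul isMultiplicative_sigma))) _
      ((isMultiplicative_zeta.mul isMultiplicative_sigma).pmul
        (isMultiplicative_zeta.mul isMultiplicative_sigma))]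
    · intro p i hp
      rw [zeta_mul_apply, pmul_apply, zeta_mul_apply]
      rw [Nat.sum_divisors_prime_pow hp, Nat.sum_divisors_prime_pow hp]
      simp only [pmul_apply, sigma_zero_apply_prime_pow hp]
      have := sum_cube_aux (i + 1)
      simp only [pow_succ, pow_zero] at *
      calc ∑ j ∈ Finset.range (i + 1), (j + 1) * ((j + 1) * (j + 1))
          = ∑ j ∈ Finset.range (i + 1), (j + 1) ^ 3 := by
            apply Finset.sum_congr rfl; intro j _; ring
        _ = (∑ j ∈ Finset.range (i + 1), (j + 1)) ^ 2 := sum_cube_aux (i + 1)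
        _ = (∑ j ∈ Finset.range (i + 1), (j + 1)) * (∑ j ∈ Finset.range (i + 1), (j + 1)) := sq _
  have h := congrFun (congrArg (fun f => f.toFun) key) n
  simp only [ArithmeticFunction.toFun_eq, zeta_mul_apply, pmul_apply, sigma_zero_apply] at h
  ring_nf at h ⊢
  exact h

open scoped Pointwise in
lemma submul_aux {n d : ℕ} (hd : d ∈ n.divisors) :
    n.divisors.card ≤ d.divisors.card * (n / d).divisors.card := by
  obtain ⟨hdvd, hn⟩ := Nat.mem_divisors.mp hd
  have : n = d * (n / d) := (Nat.div_mul_cancel hdvd).symm ▸ (Nat.mul_div_cancel' hdvd).symm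
  calc n.divisors.card = (d * (n / d)).divisors.card := by rw [Nat.mul_div_cancel' hdvd]
    _ = (d.divisors * (n / d).divisors).card := by rw [Nat.divisors_mul]
    _ ≤ d.divisors.card * (n / d).divisors.card := Finset.card_mul_le

/-- For every positive integer `n`,
`τ(n) · ∑_{d ∣ n} τ(n/d)² / τ(d) ≤ τ₃(n)²`. -/
theorem stmt4 (n : ℕ) (hn : 0 < n) :
    (n.divisors.card : ℝ) *
        ∑ d ∈ n.divisors, ((n / d).divisors.card : ℝ) ^ 2 / (d.divisors.card : ℝ)
      ≤ (tau3 n : ℝ) ^ 2 := by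
  rw [Finset.mul_sum]
  have step1 : ∀ d ∈ n.divisors,
      (n.divisors.card : ℝ) * (((n / d).divisors.card : ℝ) ^ 2 / (d.divisors.card : ℝ))
        ≤ ((n / d).divisors.card : ℝ) ^ 3 := by
    intro d hd
    have hdvd := (Nat.mem_divisors.mp hd).1
    have hdpos : 0 < d := Nat.pos_of_mem_divisors hd
    have hτd : (0 : ℝ) < (d.divisors.card : ℝ) := by
      exact_mod_cast Finset.card_pos.mpr (Nat.nonempty_divisors.mpr hdpos.ne')
    have hsub : (n.divisors.card : ℝ) ≤ (d.divisors.card : ℝ) * ((n / d).divisors.card : ℝ) := by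
      exact_mod_cast submul_aux hd
    rw [← mul_div_assoc, div_le_iff₀ hτd]
    have hτnd : (0 : ℝ) ≤ ((n / d).divisors.card : ℝ) := by positivity
    nlinarith [sq_nonneg ((n / d).divisors.card : ℝ)]
  calc ∑ d ∈ n.divisors,
        (n.divisors.card : ℝ) * (((n / d).divisors.card : ℝ) ^ 2 / (d.divisors.card : ℝ))
      ≤ ∑ d ∈ n.divisors, ((n / d).divisors.card : ℝ) ^ 3 := Finset.sum_le_sum step1
    _ = ∑ d ∈ n.divisors, ((d.divisors.card : ℝ)) ^ 3 :=
        Nat.sum_div_divisors n (fun d => ((d.divisors.card : ℝ)) ^ 3)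
    _ = ((∑ d ∈ n.divisors, d.divisors.card : ℕ) : ℝ) ^ 2 := by
        push_cast
        exact_mod_cast congrArg (fun x : ℕ => (x : ℝ)) (liouville_aux n hn.ne')
    _ = (tau3 n : ℝ) ^ 2 := by
        congr 1
        norm_cast
        unfold tau3
        exact (Nat.sum_div_divisors n (fun d => d.divisors.card)).symm
end

section
/- Let a, b, d be positive integers with gcd(a, b, d) = 1, and let R, S ≥ 1 be real. The number of pairs of positive integers (r, s) with r ≤ R, s ≤ S, and a·r ≡ b·s (mod d) is at most R·S/d + √(R·S). -/
/-!
Put `g = gcd(b, d)`. A solution has `g ∣ a r`, hence `g ∣ r` because `gcd(a, g) = 1`, and for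
fixed `r` the admissible `s` form a single residue class modulo `d / g`. This gives at most
`(R / g) (S g / d + 1) ≤ RS/d + R` solutions; exchanging the roles of `(a, R)` and `(b, S)` gives
`RS/d + S`, and `min(R, S) ≤ √(RS)`.
-/

open Finset

namespace CongruencePairs

def congrPairs (a b d M N : ℕ) : Finset (ℕ × ℕ) :=
  {p ∈ Icc 1 M ×ˢ Icc 1 N | a * p.1 ≡ b * p.2 [MOD d]}

theorem card_congrPairs_comm (a b d M N : ℕ) :
    #(congrPairs a b d M N) = #(congrPairs b a d N M) :=
  card_nbij' Prod.swap Prod.swap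
    (fun p hp => by simp_all [congrPairs, Nat.ModEq.comm])
    (fun p hp => by simp_all [congrPairs, Nat.ModEq.comm])
    (fun _ _ => rfl) (fun _ _ => rfl)

theorem card_filter_modEq_Iic_le (N m v : ℕ) : #{s ∈ Iic N | s ≡ v [MOD m]} ≤ N / m + 1 := by
  -- `s ↦ s / m` is injective on a residue class, as `s = m * (s / m) + s % m`
  calc #{s ∈ Iic N | s ≡ v [MOD m]} ≤ #(range (N / m + 1)) := by
        refine card_le_card_of_injOn (· / m) (fun s hs => ?_) (fun s hs t ht hst => ?_)
        · simp only [coe_filter, mem_Iic, Set.mem_ofPred_eq] at hs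
          simpa [Nat.lt_succ_iff] using Nat.div_le_div_right hs.1
        · simp only [coe_filter, mem_Iic, Set.mem_ofPred_eq] at hs ht
          rw [← Nat.div_add_mod s m, ← Nat.div_add_mod t m, hs.2.trans ht.2.symm]
          exact congrArg (m * · + t % m) hst
    _ = N / m + 1 := card_range _

theorem card_filter_mul_modEq_le {d : ℕ} (hd : 0 < d) (b c N : ℕ) :
    #{s ∈ Icc 1 N | b * s ≡ c [MOD d]} ≤ N / (d / Nat.gcd d b) + 1 := by
  obtain hempty | ⟨s₀, hs₀⟩ := {s ∈ Icc 1 N | b * s ≡ c [MOD d]}.eq_empty_or_nonempty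
  · simp [hempty]
  have hsub : {s ∈ Icc 1 N | b * s ≡ c [MOD d]} ⊆ {s ∈ Iic N | s ≡ s₀ [MOD d / Nat.gcd d b]} := by
    intro s hs
    simp only [mem_filter, mem_Icc, mem_Iic] at hs hs₀ ⊢
    exact ⟨hs.1.2, Nat.ModEq.cancel_left_div_gcd hd (hs.2.trans hs₀.2.symm)⟩
  exact (card_le_card hsub).trans (card_filter_modEq_Iic_le _ _ _)

theorem gcd_dvd_of_mul_modEq {a b d r s : ℕ} (hcop : Nat.Coprime a (Nat.gcd b d))
    (h : a * r ≡ b * s [MOD d]) : Nat.gcd b d ∣ r :=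
  hcop.symm.dvd_of_dvd_mul_left <| ((h.dvd_iff (Nat.gcd_dvd_right b d)).mpr
    ((Nat.gcd_dvd_left b d).mul_right s))

theorem card_congrPairs_le {a b d : ℕ} (hd : 0 < d) (hcop : Nat.Coprime a (Nat.gcd b d))
    (M N : ℕ) :
    #(congrPairs a b d M N) ≤ M / Nat.gcd b d * (N / (d / Nat.gcd b d) + 1) := by
  set g := Nat.gcd b d
  set K := N / (d / g) + 1
  have hfiber (r : ℕ) : #{s ∈ Icc 1 N | a * r ≡ b * s [MOD d]} ≤ if g ∣ r then K else 0 := by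
    split_ifs with hr
    · simpa only [Nat.gcd_comm d b, Nat.ModEq.comm] using card_filter_mul_modEq_le hd b (a * r) N
    · simp [fun s => mt (gcd_dvd_of_mul_modEq (s := s) hcop) hr]
  calc #(congrPairs a b d M N)
      = ∑ r ∈ Icc 1 M, #{s ∈ Icc 1 N | a * r ≡ b * s [MOD d]} := by
        simp only [congrPairs, card_filter, sum_product]
    _ ≤ ∑ r ∈ Icc 1 M, if g ∣ r then K else 0 := sum_le_sum fun r _ => hfiber r
    _ = #{r ∈ Ioc 0 M | g ∣ r} * K := by
        rw [← sum_filter, sum_const, smul_eq_mul, ← Icc_add_one_left_eq_Ioc, zero_add]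
    _ = M / g * K := by rw [Nat.Ioc_filter_dvd_card_eq_div]

theorem card_congrPairs_floor_le {a b d : ℕ} (hd : 0 < d) (hcop : Nat.Coprime a (Nat.gcd b d))
    {R S : ℝ} (hR : 0 ≤ R) (hS : 0 ≤ S) :
    (#(congrPairs a b d ⌊R⌋₊ ⌊S⌋₊) : ℝ) ≤ R * S / d + R := by
  set g := Nat.gcd b d
  have hg : 0 < g := Nat.gcd_pos_of_pos_right b hd
  have hM : ((⌊R⌋₊ / g : ℕ) : ℝ) ≤ R / g :=
    Nat.cast_div_le.trans (by gcongr; exact Nat.floor_le hR)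
  have hN : ((⌊S⌋₊ / (d / g) : ℕ) : ℝ) ≤ S / (d / g : ℕ) :=
    Nat.cast_div_le.trans (by gcongr; exact Nat.floor_le hS)
  calc (#(congrPairs a b d ⌊R⌋₊ ⌊S⌋₊) : ℝ)
      ≤ ((⌊R⌋₊ / g * (⌊S⌋₊ / (d / g) + 1) : ℕ) : ℝ) := by
        exact_mod_cast card_congrPairs_le hd hcop _ _
    _ ≤ R / g * (S / (d / g : ℕ) + 1) := by
        push_cast only [Nat.cast_mul, Nat.cast_add, Nat.cast_one]
        gcongr
    _ = R * S / d + R / g := by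
        rw [Nat.cast_div (Nat.gcd_dvd_right b d) (by positivity)]
        field_simp
        ring
    _ ≤ R * S / d + R := by
        gcongr
        exact div_le_self hR (by exact_mod_cast hg)

end CongruencePairs

open CongruencePairs

theorem Real.min_le_sqrt_mul {x y : ℝ} (hx : 0 ≤ x) (hy : 0 ≤ y) : min x y ≤ √(x * y) :=
  (Real.le_sqrt (le_min hx hy) (mul_nonneg hx hy)).mpr <| by
    rw [sq]
    exact mul_le_mul (min_le_left x y) (min_le_right x y) (le_min hx hy) hx

theorem stmt5_general (a b d : ℕ) (hd : 0 < d)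
    (hgcd : Nat.gcd a (Nat.gcd b d) = 1) (R S : ℝ) (hR : 1 ≤ R) (hS : 1 ≤ S) :
    ((((Finset.Icc 1 ⌊R⌋₊) ×ˢ (Finset.Icc 1 ⌊S⌋₊)).filter
        (fun p : ℕ × ℕ => a * p.1 % d = b * p.2 % d)).card : ℝ)
      ≤ R * S / d + Real.sqrt (R * S) := by
  have hR₀ : 0 ≤ R := by linarith
  have hS₀ : 0 ≤ S := by linarith
  have hcop' : Nat.Coprime b (Nat.gcd a d) := by rwa [Nat.Coprime, Nat.gcd_left_comm]
  have hRbound := card_congrPairs_floor_le hd hgcd hR₀ hS₀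
  have hSbound := card_congrPairs_floor_le hd hcop' hS₀ hR₀
  rw [← card_congrPairs_comm, mul_comm S R] at hSbound
  calc (#(congrPairs a b d ⌊R⌋₊ ⌊S⌋₊) : ℝ)
      ≤ R * S / d + min R S := by
        rw [← min_add_add_left]
        exact le_min hRbound hSbound
    _ ≤ R * S / d + √(R * S) := by
        gcongr
        exact Real.min_le_sqrt_mul hR₀ hS₀

/-- Let `a, b, d` be positive integers with `gcd(a,b,d) = 1` and `R, S ≥ 1` real.
The number of pairs of positive integers `(r,s)` with `r ≤ R`, `s ≤ S` and
`a r ≡ b s (mod d)` is at most `RS/d + √(RS)`. -/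
theorem stmt5 (a b d : ℕ) (ha : 0 < a) (hb : 0 < b) (hd : 0 < d)
    (hgcd : Nat.gcd a (Nat.gcd b d) = 1) (R S : ℝ) (hR : 1 ≤ R) (hS : 1 ≤ S) :
    ((((Finset.Icc 1 ⌊R⌋₊) ×ˢ (Finset.Icc 1 ⌊S⌋₊)).filter
        (fun p : ℕ × ℕ => a * p.1 % d = b * p.2 % d)).card : ℝ)
      ≤ R * S / d + Real.sqrt (R * S) :=
  stmt5_general a b d hd hgcd R S hR hS
end

section
/- For any integers a, b and any positive integer q, the number of pairs (γ₁, γ₂) of residues mod q satisfying a·γ₁² ≡ b·γ₂² (mod q) is at most gcd(lcm(a,b), q) · q · τ(q). -/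
/-!
Write `N(a, b) = ∑_c r_a(c) r_b(c)` with `r_a(c) = #{x | a x² = c}`; Cauchy–Schwarz gives
`N(a, b)² ≤ N(a, a) N(b, b)`, so it suffices to bound `N(a, a)` by `gcd(a, q) q τ(q)`.
Substituting `x = y + s` turns `a x² = a y²` into the linear equation `2as · y = -as²`,
which has at most `gcd(2as, q) ≤ gcd(a, q) gcd(2s, q)` solutions `y`. Finally
`∑_{s mod q} gcd(2s, q) ≤ q τ(q)`: there are `φ(q/d)` residues `s` with `gcd(s, q) = d`,
each has `gcd(2s, q) = d gcd(q/d, 2)`, and `φ(m) gcd(m, 2) ≤ m` because for even `m`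
all units are odd.
-/

open Finset

section FiberProduct

variable {α β γ : Type*} [Fintype α] [Fintype β] [Fintype γ] [DecidableEq γ]

lemma card_filter_apply_eq_apply_eq_sum (f : α → γ) (g : β → γ) :
    #{p : α × β | f p.1 = g p.2} = ∑ c, #{x | f x = c} * #{y | g y = c} := by
  rw [card_eq_sum_card_fiberwise (f := fun p => f p.1) (t := univ) (by simp)]
  refine sum_congr rfl fun c _ => ?_
  rw [← card_product, filter_filter, ← filter_product, univ_product_univ]
  congr 1
  ext p
  simp only [mem_filter, mem_univ, true_and]
  constructor
  · rintro ⟨h, rfl⟩; exact ⟨rfl, h.symm⟩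
  · rintro ⟨rfl, h⟩; exact ⟨h.symm, rfl⟩

lemma card_filter_apply_eq_apply_sq_le (f : α → γ) (g : β → γ) :
    #{p : α × β | f p.1 = g p.2} ^ 2 ≤
      #{p : α × α | f p.1 = f p.2} * #{p : β × β | g p.1 = g p.2} := by
  simp only [card_filter_apply_eq_apply_eq_sum, ← sq]
  exact sum_mul_sq_le_sq_mul_sq _ _ _

end FiberProduct

section FiniteRing

variable {R : Type*} [CommRing R] [Fintype R] [DecidableEq R]

lemma card_mul_eq_le_card_mul_eq_zero (c d : R) : #{y | c * y = d} ≤ #{y | c * y = 0} := by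
  by_cases hd : d ∈ Set.range (AddMonoidHom.mulLeft c)
  · exact (AddMonoidHom.card_fiber_eq_of_mem_range _ hd ⟨0, mul_zero c⟩).le
  · calc #{y | c * y = d} = 0 :=
          card_eq_zero.mpr (filter_eq_empty_iff.mpr fun y _ hy => hd ⟨y, hy⟩)
      _ ≤ _ := Nat.zero_le _

lemma card_mul_sq_eq_mul_sq_le_sum (a : R) :
    #{p : R × R | a * p.1 ^ 2 = a * p.2 ^ 2} ≤ ∑ s, #{y | 2 * a * s * y = 0} := by
  let e : R × R ≃ R × R :=
    { toFun := fun p => (p.2 + p.1, p.2), invFun := fun p => (p.1 - p.2, p.2),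
      left_inv := fun p => by simp, right_inv := fun p => by simp }
  calc #{p : R × R | a * p.1 ^ 2 = a * p.2 ^ 2}
      = ∑ p : R × R, if a * (e p).1 ^ 2 = a * (e p).2 ^ 2 then 1 else 0 := by
        rw [card_filter, e.sum_comp (fun p => if a * p.1 ^ 2 = a * p.2 ^ 2 then 1 else 0)]
    _ = ∑ s, #{y | 2 * a * s * y = -(a * s ^ 2)} := by
        rw [Fintype.sum_prod_type]
        refine sum_congr rfl fun s _ => ?_
        rw [card_filter]
        refine sum_congr rfl fun y _ => if_congr ?_ rfl rfl
        simp only [e, Equiv.coe_fn_mk]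
        rw [← sub_eq_zero, eq_neg_iff_add_eq_zero,
          show a * (y + s) ^ 2 - a * y ^ 2 = 2 * a * s * y + a * s ^ 2 by ring]
    _ ≤ ∑ s, #{y | 2 * a * s * y = 0} :=
        sum_le_sum fun s _ => card_mul_eq_le_card_mul_eq_zero _ _

end FiniteRing

namespace Nat

lemma two_mul_totient_le_of_even {m : ℕ} (hm : Even m) : 2 * φ m ≤ m := by
  have hodd : ∀ x ∈ range m, m.Coprime x → x % 2 = 1 := fun x _ hx => by
    by_contra h
    have := Nat.dvd_gcd (even_iff_two_dvd.mp hm) (Nat.dvd_of_mod_eq_zero (n := x) (by omega))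
    rw [hx.gcd_eq_one] at this
    omega
  have hm2 := Nat.even_iff.mp hm
  suffices φ m ≤ #(range (m / 2)) by rw [card_range] at this; omega
  refine card_le_card_of_injOn (· / 2) (fun x hx => ?_) (fun x hx y hy hxy => ?_)
  · simp only [mem_coe, mem_filter] at hx
    have := hodd x hx.1 hx.2
    simp only [mem_range, mem_coe] at hx ⊢
    omega
  · simp only [mem_coe, mem_filter] at hx hy hxy
    have := hodd x hx.1 hx.2
    have := hodd y hy.1 hy.2
    omega

lemma totient_mul_gcd_two_le (m : ℕ) : φ m * m.gcd 2 ≤ m := by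
  rcases Nat.even_or_odd m with hm | hm
  · rw [Nat.gcd_eq_right (even_iff_two_dvd.mp hm), mul_comm]
    exact two_mul_totient_le_of_even hm
  · rw [(Nat.coprime_two_right.mpr hm).gcd_eq_one, mul_one]
    exact totient_le m

lemma gcd_two_mul_right (q s : ℕ) : q.gcd (2 * s) = q.gcd s * (q / q.gcd s).gcd 2 := by
  rcases Nat.eq_zero_or_pos (q.gcd s) with h | hg
  · obtain ⟨rfl, rfl⟩ := Nat.gcd_eq_zero_iff.mp h
    simp
  obtain ⟨q', s', hcop, hq, hs⟩ := Nat.exists_coprime q s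
  set g := q.gcd s
  rw [hq, hs, Nat.mul_div_cancel _ hg, ← mul_assoc, Nat.gcd_mul_right,
    hcop.symm.gcd_mul_right_cancel_right, mul_comm]

lemma sum_range_gcd_two_mul_le (q : ℕ) :
    ∑ s ∈ range q, q.gcd (2 * s) ≤ q * q.divisors.card := by
  rcases Nat.eq_zero_or_pos q with rfl | hq
  · simp
  have hmaps : ∀ s ∈ range q, q.gcd s ∈ q.divisors := fun s _ =>
    mem_divisors.mpr ⟨Nat.gcd_dvd_left q s, hq.ne'⟩
  calc ∑ s ∈ range q, q.gcd (2 * s)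
      = ∑ d ∈ q.divisors, ∑ s ∈ range q with q.gcd s = d, q.gcd (2 * s) :=
        (sum_fiberwise_of_maps_to hmaps _).symm
    _ = ∑ d ∈ q.divisors, φ (q / d) * (d * (q / d).gcd 2) := by
        refine sum_congr rfl fun d hd => ?_
        rw [totient_div_of_dvd (dvd_of_mem_divisors hd), ← smul_eq_mul, ← sum_const]
        refine sum_congr rfl fun s hs => ?_
        rw [gcd_two_mul_right, (mem_filter.mp hs).2]
    _ ≤ ∑ d ∈ q.divisors, q := sum_le_sum fun d hd => by
        calc φ (q / d) * (d * (q / d).gcd 2) = d * (φ (q / d) * (q / d).gcd 2) := by ring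
          _ ≤ d * (q / d) := Nat.mul_le_mul_left d (totient_mul_gcd_two_le _)
          _ = q := Nat.mul_div_cancel' (dvd_of_mem_divisors hd)
    _ = q * q.divisors.card := by rw [sum_const, smul_eq_mul, mul_comm]

end Nat

namespace ZMod

variable {q : ℕ}

lemma sum_val_eq_sum_range [NeZero q] {M : Type*} [AddCommMonoid M] (f : ℕ → M) :
    ∑ x : ZMod q, f x.val = ∑ n ∈ range q, f n := by
  obtain ⟨n, rfl⟩ := Nat.exists_eq_succ_of_ne_zero (NeZero.ne q)
  exact Fin.sum_univ_eq_sum_range f _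

lemma card_mul_eq_zero [NeZero q] (c : ZMod q) :
    #{y : ZMod q | c * y = 0} = q.gcd c.val := by
  have h := IsAddCyclic.card_nsmulAddMonoidHom_ker (ZMod q) c.val
  rw [Nat.card_zmod, Nat.card_eq_fintype_card] at h
  rw [← h, ← Fintype.card_subtype]
  refine Fintype.card_congr (Equiv.subtypeEquivRight fun y => ?_)
  simp [nsmul_eq_mul]

lemma gcd_val_natCast (n : ℕ) : q.gcd (n : ZMod q).val = q.gcd n := by
  rw [val_natCast, Nat.gcd_comm, ← Nat.gcd_rec]

lemma gcd_val_intCast [NeZero q] (n : ℤ) : q.gcd (n : ZMod q).val = n.gcd q := by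
  rw [← Int.gcd_natCast_natCast, val_intCast, Int.gcd_comm, Int.gcd_emod]

lemma gcd_val_mul_dvd (x y : ZMod q) : q.gcd (x * y).val ∣ q.gcd x.val * q.gcd y.val := by
  rw [val_mul, Nat.gcd_comm, ← Nat.gcd_rec]
  exact gcd_mul_dvd_mul_gcd q x.val y.val

lemma card_mul_sq_eq_mul_sq_le [NeZero q] (a : ℤ) :
    #{p : ZMod q × ZMod q | (a : ZMod q) * p.1 ^ 2 = a * p.2 ^ 2}
      ≤ a.gcd q * q * q.divisors.card := by
  have hterm (s : ZMod q) :
      q.gcd (2 * (a : ZMod q) * s).val ≤ a.gcd q * q.gcd (2 * s.val) := by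
    have h2s : (2 * s : ZMod q) = ((2 * s.val : ℕ) : ZMod q) := by
      push_cast [natCast_zmod_val]; rfl
    rw [← gcd_val_intCast a, ← gcd_val_natCast (2 * s.val), ← h2s, mul_comm 2, mul_assoc]
    have hq := NeZero.pos q
    exact Nat.le_of_dvd (by positivity) (gcd_val_mul_dvd _ _)
  calc #{p : ZMod q × ZMod q | (a : ZMod q) * p.1 ^ 2 = a * p.2 ^ 2}
      ≤ ∑ s, #{y | 2 * (a : ZMod q) * s * y = 0} := card_mul_sq_eq_mul_sq_le_sum _
    _ = ∑ s : ZMod q, q.gcd (2 * (a : ZMod q) * s).val := by simp only [card_mul_eq_zero]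
    _ ≤ ∑ s : ZMod q, a.gcd q * q.gcd (2 * s.val) := sum_le_sum fun s _ => hterm s
    _ = a.gcd q * ∑ s ∈ range q, q.gcd (2 * s) := by
        rw [← mul_sum, sum_val_eq_sum_range (fun s => q.gcd (2 * s))]
    _ ≤ a.gcd q * q * q.divisors.card := by
        rw [mul_assoc]
        exact Nat.mul_le_mul_left _ (Nat.sum_range_gcd_two_mul_le q)

lemma card_filter_range_emod_eq [NeZero q] (a b : ℤ) :
    ((range q ×ˢ range q).filter
        (fun p : ℕ × ℕ =>
          (a * (p.1 : ℤ) ^ 2) % (q : ℤ) = (b * (p.2 : ℤ) ^ 2) % (q : ℤ))).card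
      = #{p : ZMod q × ZMod q | (a : ZMod q) * p.1 ^ 2 = b * p.2 ^ 2} := by
  have hcond (x y : ℕ) : (a * (x : ℤ) ^ 2) % (q : ℤ) = (b * (y : ℤ) ^ 2) % (q : ℤ) ↔
      (a : ZMod q) * (x : ZMod q) ^ 2 = b * (y : ZMod q) ^ 2 := by
    rw [← intCast_eq_intCast_iff']
    push_cast
    rfl
  refine card_nbij' (fun p => ((p.1 : ZMod q), (p.2 : ZMod q))) (fun p => (p.1.val, p.2.val))
    ?_ ?_ ?_ ?_
  · rintro ⟨x, y⟩ hp
    simp only [mem_coe, mem_filter, mem_product, mem_range] at hp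
    simpa using (hcond x y).mp hp.2
  · rintro ⟨x, y⟩ hp
    simp only [mem_coe, mem_filter, mem_univ, true_and] at hp
    simpa [mem_filter, mem_product, mem_range, val_lt, hcond] using hp
  · rintro ⟨x, y⟩ hp
    simp only [mem_coe, mem_filter, mem_product, mem_range] at hp
    simp [val_cast_of_lt hp.1.1, val_cast_of_lt hp.1.2]
  · rintro ⟨x, y⟩ -
    simp

end ZMod

theorem stmt6_general (a b : ℤ) (q : ℕ) (hq : 0 < q) :
    ((Finset.range q ×ˢ Finset.range q).filter
        (fun p : ℕ × ℕ =>
          (a * (p.1 : ℤ) ^ 2) % (q : ℤ) = (b * (p.2 : ℤ) ^ 2) % (q : ℤ))).card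
      ≤ Nat.gcd (Int.lcm a b) q * q * q.divisors.card := by
  have : NeZero q := ⟨hq.ne'⟩
  set G := (Int.lcm a b).gcd q
  have hG : 0 < G := Nat.gcd_pos_of_pos_right _ hq
  have ha : a.gcd q ≤ G :=
    Nat.le_of_dvd hG (Nat.gcd_dvd_gcd_of_dvd_left _ (Nat.dvd_lcm_left _ _))
  have hb : b.gcd q ≤ G :=
    Nat.le_of_dvd hG (Nat.gcd_dvd_gcd_of_dvd_left _ (Nat.dvd_lcm_right _ _))
  rw [ZMod.card_filter_range_emod_eq, ← Nat.pow_le_pow_iff_left two_ne_zero]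
  calc _ ≤ _ := card_filter_apply_eq_apply_sq_le (fun x : ZMod q => (a : ZMod q) * x ^ 2)
        (fun y : ZMod q => (b : ZMod q) * y ^ 2)
    _ ≤ (a.gcd q * q * q.divisors.card) * (b.gcd q * q * q.divisors.card) :=
        Nat.mul_le_mul (ZMod.card_mul_sq_eq_mul_sq_le a) (ZMod.card_mul_sq_eq_mul_sq_le b)
    _ ≤ (G * q * q.divisors.card) * (G * q * q.divisors.card) := by gcongr
    _ = (G * q * q.divisors.card) ^ 2 := (sq _).symm

/-- For integers `a, b` not both zero and `q ≥ 1`, the number of pairs `(γ₁, γ₂)`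
of residues mod `q` with `a γ₁² ≡ b γ₂² (mod q)` is at most `gcd(lcm(a,b), q) · q · τ(q)`. -/
theorem stmt6 (a b : ℤ) (hab : ¬(a = 0 ∧ b = 0)) (q : ℕ) (hq : 0 < q) :
    ((Finset.range q ×ˢ Finset.range q).filter
        (fun p : ℕ × ℕ =>
          (a * (p.1 : ℤ) ^ 2) % (q : ℤ) = (b * (p.2 : ℤ) ^ 2) % (q : ℤ))).card
      ≤ Nat.gcd (Int.lcm a b) q * q * q.divisors.card :=
  stmt6_general a b q hq
end

section
/- Let p be an odd prime, ν ≥ 0, and a an integer with p ∤ a. Then p^(−ν) · N(a; p^ν) = 1 + (1 − 1/p) · (⌊ν/2⌋ + ⌊(ν+1)/2⌋ · (a/p)), where (a/p) is the Legendre symbol and N(a; p^ν) counts pairs (γ₁, γ₂) mod p^ν with a·γ₁² ≡ γ₂² (mod p^ν). -/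
/-!
Work in `ZMod (p ^ ν)`. If `(a/p) = 1`, Hensel lifting writes `a` as the square of a unit `b`, and
`(γ₁, γ₂) ↦ (bγ₁ + γ₂, bγ₁ - γ₂)` turns `a γ₁² = γ₂²` into `xy = 0`; for fixed `x` there are
`gcd(x, p^ν)` choices of `y`, and `∑ₓ gcd(x, p^ν) = p^ν + ν (p - 1) p^(ν-1)`. If `(a/p) = -1`, then
`a γ₁² ≡ γ₂² (mod p)` forces `p ∣ γ₁, γ₂`, and descending by `p²` shows that the solutions mod `p^ν`
are exactly the pairs of multiples of `p^⌈ν/2⌉`.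
-/

open Finset

namespace Nat

theorem card_filter_range_dvd_of_dvd {n d : ℕ} (hd : d ∣ n) : #{x ∈ range n | d ∣ x} = n / d := by
  obtain ⟨k, rfl⟩ := hd
  rcases d.eq_zero_or_pos with rfl | hd0
  · simp
  rw [Nat.mul_div_cancel_left k hd0]
  conv_rhs => rw [← card_range k]
  refine card_nbij' (· / d) (d * ·) ?_ ?_ ?_ ?_ <;> intro x hx <;>
    simp only [coe_filter, mem_range, Set.mem_ofPred_eq, coe_range, Set.mem_Iio] at hx ⊢
  · exact Nat.div_lt_of_lt_mul hx.1
  · exact ⟨by gcongr, dvd_mul_right d x⟩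
  · exact Nat.mul_div_cancel' hx.2
  · exact Nat.mul_div_cancel_left x hd0

theorem dvd_mul_iff_div_gcd_dvd {n x y : ℕ} (hn : n ≠ 0) : n ∣ x * y ↔ n / gcd x n ∣ y := by
  have hg : 0 < gcd x n := Nat.gcd_pos_of_pos_right x (Nat.pos_of_ne_zero hn)
  have hcop : (x / gcd x n).Coprime (n / gcd x n) := Nat.coprime_div_gcd_div_gcd hg
  calc n ∣ x * y ↔ gcd x n * (n / gcd x n) ∣ gcd x n * (x / gcd x n * y) := by
        rw [Nat.mul_div_cancel' (gcd_dvd_right x n), ← Nat.mul_assoc,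
          Nat.mul_div_cancel' (gcd_dvd_left x n)]
    _ ↔ n / gcd x n ∣ x / gcd x n * y := Nat.mul_dvd_mul_iff_left hg
    _ ↔ n / gcd x n ∣ y := hcop.symm.dvd_mul_left

theorem card_filter_range_dvd_mul {n : ℕ} (hn : n ≠ 0) (x : ℕ) :
    #{y ∈ range n | n ∣ x * y} = gcd x n := by
  simp_rw [dvd_mul_iff_div_gcd_dvd hn]
  rw [card_filter_range_dvd_of_dvd (Nat.div_dvd_of_dvd (gcd_dvd_right x n)),
    Nat.div_div_self (gcd_dvd_right x n) hn]

theorem sum_range_gcd_eq_sum_divisors {n : ℕ} (hn : n ≠ 0) :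
    ∑ x ∈ range n, gcd x n = ∑ d ∈ n.divisors, φ d * (n / d) := by
  have hgcd : ∀ x, gcd x n = ∑ d ∈ n.divisors with d ∣ x, φ d := fun x ↦ by
    rw [← sum_totient (gcd x n)]
    congr 1
    ext d
    simp [Nat.dvd_gcd_iff, hn, and_comm]
  simp_rw [hgcd, sum_filter]
  rw [sum_comm]
  refine sum_congr rfl fun d hd ↦ ?_
  rw [← sum_filter, sum_const, card_filter_range_dvd_of_dvd (dvd_of_mem_divisors hd),
    smul_eq_mul, Nat.mul_comm]

theorem sum_range_gcd_prime_pow {p : ℕ} (hp : p.Prime) (ν : ℕ) :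
    ∑ x ∈ range (p ^ ν), gcd x (p ^ ν) = p ^ ν + ν * (p - 1) * p ^ (ν - 1) := by
  have hterm : ∀ i ∈ range ν, φ (p ^ (i + 1)) * (p ^ ν / p ^ (i + 1)) = (p - 1) * p ^ (ν - 1) := by
    intro i hi
    have hiν := mem_range.mp hi
    rw [totient_prime_pow_succ hp, Nat.pow_div hiν hp.pos, Nat.mul_comm (p ^ i), Nat.mul_assoc,
      ← pow_add, show i + (ν - (i + 1)) = ν - 1 by omega]
  rw [sum_range_gcd_eq_sum_divisors (pow_ne_zero ν hp.ne_zero), sum_divisors_prime_pow hp,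
    sum_range_succ', pow_zero, totient_one, Nat.div_one, one_mul, Nat.add_comm, sum_congr rfl hterm,
    sum_const, card_range, smul_eq_mul, Nat.mul_assoc]

end Nat

section CommRing

variable {R : Type*} [CommRing R]

theorem exists_sq_modEq_pow_succ {p a b u : R} (hu : p ∣ 2 * b * u - 1) (hb : p ∣ a - b ^ 2)
    (k : ℕ) : ∃ c, p ∣ c - b ∧ p ^ (k + 1) ∣ a - c ^ 2 := by
  induction k with
  | zero => exact ⟨b, by simp, by simpa using hb⟩
  | succ k ih =>
    obtain ⟨c, ⟨d, hd⟩, m, hm⟩ := ih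
    obtain ⟨t, ht⟩ := hu
    -- Newton step: `2 c u ≡ 2 b u ≡ 1 (mod p)`, so `u` inverts the derivative `2 c`.
    refine ⟨c + m * u * p ^ (k + 1), ⟨d + m * u * p ^ k, by linear_combination hd⟩,
      -(m * t) - 2 * m * u * d - m ^ 2 * u ^ 2 * p ^ k, ?_⟩
    linear_combination hm - p ^ (k + 1) * m * ht - 2 * p ^ (k + 1) * m * u * hd

theorem pow_dvd_of_pow_dvd_mul_sq_sub_sq [IsDomain R] {p a : R} (hp : p ≠ 0)
    (hanis : ∀ x y, p ∣ a * x ^ 2 - y ^ 2 → p ∣ x ∧ p ∣ y) (ν : ℕ) {x y : R}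
    (h : p ^ ν ∣ a * x ^ 2 - y ^ 2) : p ^ ((ν + 1) / 2) ∣ x ∧ p ^ ((ν + 1) / 2) ∣ y := by
  induction ν using Nat.twoStepInduction generalizing x y with
  | zero => simp
  | one => simpa using hanis x y (by simpa using h)
  | more ν ih _ =>
    obtain ⟨⟨x', rfl⟩, ⟨y', rfl⟩⟩ := hanis x y (dvd_trans (dvd_pow_self p (by omega)) h)
    have h' : p ^ 2 * p ^ ν ∣ p ^ 2 * (a * x' ^ 2 - y' ^ 2) := by
      rw [← pow_add, add_comm]; convert h using 1; ring
    obtain ⟨hx, hy⟩ := ih ((mul_dvd_mul_iff_left (pow_ne_zero 2 hp)).mp h')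
    rw [show (ν + 2 + 1) / 2 = (ν + 1) / 2 + 1 by omega, pow_succ']
    exact ⟨mul_dvd_mul_left p hx, mul_dvd_mul_left p hy⟩

variable [Fintype R] [DecidableEq R]

theorem card_filter_mul_sq_eq_sq_of_isUnit {b : R} (hb : IsUnit b) :
    #{z : R × R | b ^ 2 * z.1 ^ 2 = z.2 ^ 2} = #{z : R × R | z.1 ^ 2 = z.2 ^ 2} :=
  card_equiv ((Units.mulLeft hb.unit).prodCongr (Equiv.refl R)) fun z ↦ by simp [mul_pow]

theorem card_filter_sq_eq_sq_of_isUnit_two (h2 : IsUnit (2 : R)) :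
    #{z : R × R | z.1 ^ 2 = z.2 ^ 2} = #{z : R × R | z.1 * z.2 = 0} := by
  obtain ⟨c, hc⟩ := h2.exists_right_inv
  let e : R × R ≃ R × R :=
    { toFun z := (z.1 + z.2, z.1 - z.2)
      invFun z := (c * (z.1 + z.2), c * (z.1 - z.2))
      left_inv z := Prod.ext (by linear_combination z.1 * hc) (by linear_combination z.2 * hc)
      right_inv z := Prod.ext (by linear_combination z.1 * hc) (by linear_combination z.2 * hc) }
  refine card_equiv e fun z ↦ ?_
  simp only [mem_filter, mem_univ, true_and, e, Equiv.coe_fn_mk]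
  constructor <;> intro h <;> linear_combination h

end CommRing

-- `#(sqCongrSolutions a q)` is the paper's `N(a; q)`.
def sqCongrSolutions (a : ℤ) (q : ℕ) : Finset (ℕ × ℕ) :=
  {t ∈ range q ×ˢ range q | a * t.1 ^ 2 ≡ t.2 ^ 2 [ZMOD q]}

theorem card_filter_range_prod_range_eq_zmod {n : ℕ} [NeZero n] (P : ZMod n × ZMod n → Prop)
    [DecidablePred P] : #{t ∈ range n ×ˢ range n | P (t.1, t.2)} = #{z | P z} := by
  refine card_nbij' (fun t ↦ (t.1, t.2)) (fun z ↦ (z.1.val, z.2.val)) ?_ ?_ ?_ ?_ <;>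
    intro t ht <;> simp only [coe_filter, mem_product, mem_range, mem_univ, true_and,
      Set.mem_ofPred_eq] at ht ⊢
  · exact ht.2
  · exact ⟨⟨ZMod.val_lt _, ZMod.val_lt _⟩, by simpa using ht⟩
  · simp [ZMod.val_cast_of_lt ht.1.1, ZMod.val_cast_of_lt ht.1.2]
  · simp

theorem card_sqCongrSolutions_of_isUnit_sq {n : ℕ} [NeZero n] (h2 : IsUnit (2 : ZMod n))
    {a : ℤ} {b : ZMod n} (hb : IsUnit b) (hab : (a : ZMod n) = b ^ 2) :
    #(sqCongrSolutions a n) = ∑ x ∈ range n, Nat.gcd x n := by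
  have hsq : ∀ x y : ℕ, a * x ^ 2 ≡ y ^ 2 [ZMOD n] ↔ b ^ 2 * (x : ZMod n) ^ 2 = (y : ZMod n) ^ 2 :=
    fun x y ↦ by rw [← ZMod.intCast_eq_intCast_iff, ← hab]; push_cast; rfl
  have hmul : ∀ x y : ℕ, n ∣ x * y ↔ (x : ZMod n) * y = 0 := fun x y ↦ by
    rw [← Nat.cast_mul, ZMod.natCast_eq_zero_iff]
  calc #(sqCongrSolutions a n)
      = #{z : ZMod n × ZMod n | b ^ 2 * z.1 ^ 2 = z.2 ^ 2} := by
        rw [sqCongrSolutions, filter_congr fun t _ ↦ hsq t.1 t.2]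
        exact card_filter_range_prod_range_eq_zmod fun z ↦ b ^ 2 * z.1 ^ 2 = z.2 ^ 2
    _ = #{z : ZMod n × ZMod n | z.1 * z.2 = 0} := by
        rw [card_filter_mul_sq_eq_sq_of_isUnit hb, card_filter_sq_eq_sq_of_isUnit_two h2]
    _ = #{t ∈ range n ×ˢ range n | n ∣ t.1 * t.2} := by
        rw [← card_filter_range_prod_range_eq_zmod fun z : ZMod n × ZMod n ↦ z.1 * z.2 = 0]
        simp_rw [hmul]
    _ = ∑ x ∈ range n, Nat.gcd x n := by
        rw [card_filter, sum_product]
        refine sum_congr rfl fun x _ ↦ ?_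
        rw [← card_filter, Nat.card_filter_range_dvd_mul (NeZero.ne n)]

section OddPrime

variable {p : ℕ} [Fact p.Prime]

theorem exists_isUnit_sq_eq_of_legendreSym_eq_one (hodd : Odd p) {a : ℤ}
    (ha : legendreSym p a = 1) (ν : ℕ) :
    ∃ b : ZMod (p ^ ν), IsUnit b ∧ (a : ZMod (p ^ ν)) = b ^ 2 := by
  have ha0 : (a : ZMod p) ≠ 0 := fun h ↦ by simp [(legendreSym.eq_zero_iff p a).mpr h] at ha
  obtain ⟨r, hr⟩ := (legendreSym.eq_one_iff p ha0).mp ha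
  have hr0 : r ≠ 0 := by rintro rfl; simp at hr; exact ha0 hr
  have h2 : (2 : ZMod p) ≠ 0 :=
    Ring.two_ne_zero (by rw [ZMod.ringChar_zmod_n]; exact hodd.ne_two_of_dvd_nat dvd_rfl)
  have h2r : (2 * r : ZMod p) ≠ 0 := mul_ne_zero h2 hr0
  obtain ⟨c, hcr, hc⟩ := exists_sq_modEq_pow_succ (p := (p : ℤ)) (a := a) (b := (r.cast : ℤ))
    (u := ((2 * r)⁻¹ : ZMod p).cast) (by
      rw [← ZMod.intCast_zmod_eq_zero_iff_dvd]; push_cast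
      rw [mul_inv_cancel₀ h2r, sub_self])
    (by rw [← ZMod.intCast_zmod_eq_zero_iff_dvd]; push_cast; simp [hr, sq]) ν
  have hcr' : (c : ZMod p) = r := by
    simpa [sub_eq_zero] using (ZMod.intCast_zmod_eq_zero_iff_dvd _ p).mpr hcr
  have hpc : ¬ (p : ℤ) ∣ c := by
    rwa [← ZMod.intCast_zmod_eq_zero_iff_dvd, hcr']
  refine ⟨c, (ZMod.coe_int_isUnit_iff_isCoprime c _).mpr ?_, ?_⟩
  · push_cast
    exact ((Nat.prime_iff_prime_int.mp Fact.out).coprime_iff_not_dvd.mpr hpc).pow_left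
  · have := (ZMod.intCast_zmod_eq_zero_iff_dvd (a - c ^ 2) (p ^ ν)).mpr
      (by push_cast; exact (pow_dvd_pow _ ν.le_succ).trans hc)
    push_cast at this
    exact sub_eq_zero.mp this

theorem card_sqCongrSolutions_of_legendreSym_eq_one (hodd : Odd p) {a : ℤ}
    (ha : legendreSym p a = 1) (ν : ℕ) :
    #(sqCongrSolutions a (p ^ ν)) = p ^ ν + ν * (p - 1) * p ^ (ν - 1) := by
  obtain ⟨b, hb, hab⟩ := exists_isUnit_sq_eq_of_legendreSym_eq_one hodd ha ν
  have h2 : IsUnit (2 : ZMod (p ^ ν)) := by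
    exact_mod_cast (ZMod.isUnit_iff_coprime 2 _).mpr (Nat.coprime_two_left.mpr (hodd.pow))
  rw [card_sqCongrSolutions_of_isUnit_sq h2 hb hab, Nat.sum_range_gcd_prime_pow Fact.out]

theorem dvd_and_dvd_of_dvd_mul_sq_sub_sq {a : ℤ} (ha : legendreSym p a = -1) {x y : ℤ}
    (h : (p : ℤ) ∣ a * x ^ 2 - y ^ 2) : (p : ℤ) ∣ x ∧ (p : ℤ) ∣ y := by
  rw [legendreSym.eq_neg_one_iff] at ha
  simp only [← ZMod.intCast_zmod_eq_zero_iff_dvd] at h ⊢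
  push_cast at h
  have hx : (x : ZMod p) = 0 := by
    by_contra hx
    exact ha ⟨y / x, by field_simp; linear_combination h⟩
  exact ⟨hx, by simpa [hx] using h⟩

theorem card_sqCongrSolutions_of_legendreSym_eq_neg_one {a : ℤ} (ha : legendreSym p a = -1)
    (ν : ℕ) : #(sqCongrSolutions a (p ^ ν)) = p ^ (ν / 2) * p ^ (ν / 2) := by
  have hp : (p : ℤ) ≠ 0 := by exact_mod_cast (Fact.out : p.Prime).ne_zero
  have hiff : ∀ x y : ℕ, a * x ^ 2 ≡ y ^ 2 [ZMOD (p ^ ν : ℕ)] ↔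
      p ^ ((ν + 1) / 2) ∣ x ∧ p ^ ((ν + 1) / 2) ∣ y := fun x y ↦ by
    rw [Int.modEq_comm, Int.modEq_iff_dvd]
    push_cast
    constructor
    · intro h
      exact_mod_cast pow_dvd_of_pow_dvd_mul_sq_sub_sq hp
        (fun _ _ ↦ dvd_and_dvd_of_dvd_mul_sq_sub_sq ha) ν h
    · rintro ⟨hx, hy⟩
      have hx' := pow_dvd_pow_of_dvd (Int.natCast_dvd_natCast.mpr hx) 2
      have hy' := pow_dvd_pow_of_dvd (Int.natCast_dvd_natCast.mpr hy) 2
      push_cast at hx' hy'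
      rw [← pow_mul] at hx' hy'
      exact (pow_dvd_pow _ (by omega)).trans (dvd_sub (dvd_mul_of_dvd_right hx' a) hy')
  have hm : p ^ ((ν + 1) / 2) ∣ p ^ ν := pow_dvd_pow p (by omega)
  rw [sqCongrSolutions, filter_congr fun t _ ↦ hiff t.1 t.2, filter_product, card_product,
    Nat.card_filter_range_dvd_of_dvd hm, Nat.pow_div (by omega) (Fact.out : p.Prime).pos,
    show ν - (ν + 1) / 2 = ν / 2 by omega]

end OddPrime

/-- For `p` an odd prime, `p ∤ a`, `ν ≥ 0`:
`p^{-ν} N(a; p^ν) = 1 + (1 - 1/p)(⌊ν/2⌋ + ⌊(ν+1)/2⌋ (a/p))`. -/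
theorem stmt8 (p : ℕ) (hp : p.Prime) (hodd : Odd p) (ν : ℕ) (a : ℤ)
    (ha : ¬ (p : ℤ) ∣ a) :
    (((Finset.range (p ^ ν) ×ˢ Finset.range (p ^ ν)).filter
        (fun t : ℕ × ℕ =>
          (a * (t.1 : ℤ) ^ 2) % ((p : ℤ) ^ ν) = ((t.2 : ℤ) ^ 2) % ((p : ℤ) ^ ν))).card : ℚ)
      = (p : ℚ) ^ ν *
          (1 + (1 - 1 / (p : ℚ)) *
            (((ν / 2 : ℕ) : ℚ) + (((ν + 1) / 2 : ℕ) : ℚ) * ((@legendreSym p ⟨hp⟩ a : ℤ) : ℚ))) := by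
  have := Fact.mk hp
  convert_to (#(sqCongrSolutions a (p ^ ν)) : ℚ) = _ using 3
  · simp [sqCongrSolutions, Int.ModEq]
  have hp0 : (p : ℚ) ≠ 0 := by exact_mod_cast hp.ne_zero
  have ha0 : (a : ZMod p) ≠ 0 := by rwa [Ne, ZMod.intCast_zmod_eq_zero_iff_dvd]
  rcases legendreSym.eq_one_or_neg_one p ha0 with hleg | hleg
  · rw [hleg, card_sqCongrSolutions_of_legendreSym_eq_one hodd hleg]
    rcases ν with _ | ν
    · simp
    have hsum : (((ν + 1) / 2 : ℕ) : ℚ) + (((ν + 1 + 1) / 2 : ℕ) : ℚ) = ν + 1 := by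
      exact_mod_cast (by omega : (ν + 1) / 2 + (ν + 1 + 1) / 2 = ν + 1)
    rw [Int.cast_one, mul_one, hsum, Nat.add_sub_cancel]
    push_cast [Nat.cast_sub hp.one_le]
    field_simp
    ring
  · rw [hleg, card_sqCongrSolutions_of_legendreSym_eq_neg_one hleg]
    obtain ⟨k, rfl | rfl⟩ := ν.even_or_odd'
    · rw [show 2 * k / 2 = k by omega, show (2 * k + 1) / 2 = k by omega]
      push_cast; ring
    · rw [show (2 * k + 1) / 2 = k by omega, show (2 * k + 1 + 1) / 2 = k + 1 by omega]
      push_cast; field_simp; ring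
end

section
/- Let ν ≥ 1 and a ≡ 1 (mod 8). Then N(a; 2^ν) = ν · 2^ν, where N(a; 2^ν) is the number of pairs (γ₁, γ₂) mod 2^ν with a·γ₁² ≡ γ₂² (mod 2^ν). -/
open Finset

private def sol (a : ℤ) (ν : ℕ) : Finset (ℕ × ℕ) :=
  (range (2 ^ ν) ×ˢ range (2 ^ ν)).filter
    (fun t => (2 : ℤ) ^ ν ∣ (t.2 : ℤ) ^ 2 - a * (t.1 : ℤ) ^ 2)

private lemma mem_sol {a : ℤ} {ν : ℕ} {t : ℕ × ℕ} :
    t ∈ sol a ν ↔ t.1 < 2 ^ ν ∧ t.2 < 2 ^ ν ∧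
      (2 : ℤ) ^ ν ∣ (t.2 : ℤ) ^ 2 - a * (t.1 : ℤ) ^ 2 := by
  simp [sol, Finset.mem_filter, Finset.mem_product, Finset.mem_range, and_assoc]

private lemma dvd_iff_of_dvd_sub {m X Y : ℤ} (h : m ∣ X - Y) : m ∣ X ↔ m ∣ Y :=
  ⟨fun h2 => by have := dvd_sub h2 h; simpa using this,
   fun h2 => by have := dvd_add h h2; simpa using this⟩

private lemma parity_match {a x y : ℤ} (ha : a % 2 = 1) (h : (2 : ℤ) ∣ y ^ 2 - a * x ^ 2) :
    y % 2 = x % 2 := by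
  obtain ⟨k, hk⟩ := h
  have h2 : Even (y ^ 2 - a * x ^ 2) := ⟨k, by omega⟩
  rw [Int.even_sub] at h2
  simp only [Int.even_mul, Int.even_pow] at h2
  simp only [Int.even_iff, ha] at h2
  omega

private lemma exists_sqrt (a : ℤ) (ha : a % 8 = 1) (ν : ℕ) :
    ∃ b : ℤ, b % 2 = 1 ∧ (2 : ℤ) ^ ν ∣ b ^ 2 - a := by
  induction ν with
  | zero => exact ⟨1, rfl, one_dvd _⟩
  | succ n ih =>
    rcases Nat.lt_or_ge n 3 with hn | hn
    · refine ⟨1, rfl, ?_⟩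
      have h8 : (8 : ℤ) ∣ 1 - a := by omega
      have h1 : (1 : ℤ) ^ 2 - a = 1 - a := by ring
      rw [h1]
      refine dvd_trans ?_ h8
      interval_cases n <;> norm_num
    · obtain ⟨b, hb1, hb2⟩ := ih
      by_cases h : (2 : ℤ) ^ (n + 1) ∣ b ^ 2 - a
      · exact ⟨b, hb1, h⟩
      · obtain ⟨m, rfl⟩ : ∃ m, n = m + 3 := ⟨n - 3, by omega⟩
        obtain ⟨c, hc⟩ := hb2
        have hcodd : c % 2 = 1 := by
          rcases Int.emod_two_eq c with h0 | h1
          · exfalso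
            apply h
            obtain ⟨d, hd⟩ : ∃ d, c = 2 * d := ⟨c / 2, by omega⟩
            exact ⟨d, by rw [hc, hd]; ring⟩
          · exact h1
        obtain ⟨d, hd⟩ : ∃ d, c + b = 2 * d := ⟨(c + b) / 2, by omega⟩
        have h22 : (2 : ℤ) ^ (m + 2) = 2 * 2 ^ (m + 1) := by ring
        refine ⟨b + 2 ^ (m + 2), by omega, ⟨d + 2 ^ m, ?_⟩⟩
        linear_combination hc + 2 ^ (m + 3) * hd
private lemma base1 (a : ℤ) (ha : a % 8 = 1) : (sol a 1).card = 2 := by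
  obtain ⟨k, rfl⟩ : ∃ k, a = 8 * k + 1 := ⟨a / 8, by omega⟩
  have h : sol (8 * k + 1) 1 = (range (2 ^ 1) ×ˢ range (2 ^ 1)).filter (fun t => t.1 = t.2) := by
    unfold sol
    apply filter_congr
    rintro ⟨x, y⟩ hxy
    simp only [Finset.mem_product, Finset.mem_range] at hxy
    obtain ⟨hx, hy⟩ := hxy
    norm_num at hx hy
    interval_cases x <;> interval_cases y <;> push_cast <;> ring_nf <;>
      simp <;> omega
  rw [h]; decide

private lemma base2 (a : ℤ) (ha : a % 8 = 1) : (sol a 2).card = 8 := by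
  obtain ⟨k, rfl⟩ : ∃ k, a = 8 * k + 1 := ⟨a / 8, by omega⟩
  have h : sol (8 * k + 1) 2 =
      (range (2 ^ 2) ×ˢ range (2 ^ 2)).filter (fun t => t.1 ^ 2 % 4 = t.2 ^ 2 % 4) := by
    unfold sol
    apply filter_congr
    rintro ⟨x, y⟩ hxy
    simp only [Finset.mem_product, Finset.mem_range] at hxy
    obtain ⟨hx, hy⟩ := hxy
    norm_num at hx hy
    interval_cases x <;> interval_cases y <;> push_cast <;> ring_nf <;>
      simp <;> omega
  rw [h]; decide
private lemma even_count (a : ℤ) (ha : a % 2 = 1) (n : ℕ) :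
    ((sol a (n + 3)).filter (fun t => t.1 % 2 = 0)).card = 4 * (sol a (n + 1)).card := by
  have hM : (0 : ℕ) < 2 ^ (n + 1) := pow_pos (by norm_num) _
  have e1 : (4 : ℕ) * (sol a (n + 1)).card = ((range 2 ×ˢ range 2) ×ˢ sol a (n + 1)).card := by
    rw [card_product, card_product, card_range]
  rw [e1]
  symm
  apply Finset.card_bij
    (fun p _ => (2 * p.2.1 + p.1.1 * 2 ^ (n + 2), 2 * p.2.2 + p.1.2 * 2 ^ (n + 2)))
  · rintro ⟨⟨s, t⟩, u, v⟩ hp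
    simp only [Finset.mem_product, Finset.mem_range, mem_sol] at hp
    obtain ⟨⟨hs, ht⟩, hu, hv, hdvd⟩ := hp
    simp only [mem_filter, mem_sol]
    have hp2 : (2 : ℕ) ^ (n + 2) = 2 * 2 ^ (n + 1) := by ring
    have hp3 : (2 : ℕ) ^ (n + 3) = 4 * 2 ^ (n + 1) := by ring
    obtain ⟨k, hk⟩ := hdvd
    refine ⟨⟨?_, ?_,
        ⟨k + 2 * (v : ℤ) * t + (t : ℤ) ^ 2 * 2 ^ (n + 1)
          - 2 * a * (u : ℤ) * s - a * (s : ℤ) ^ 2 * 2 ^ (n + 1), by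
            push_cast; linear_combination (4 : ℤ) * hk⟩⟩, ?_⟩ <;>
      rcases (show s = 0 ∨ s = 1 by omega) with rfl | rfl <;>
      rcases (show t = 0 ∨ t = 1 by omega) with rfl | rfl <;> omega
  · rintro ⟨⟨s₁, t₁⟩, u₁, v₁⟩ h₁ ⟨⟨s₂, t₂⟩, u₂, v₂⟩ h₂ heq
    simp only [Finset.mem_product, Finset.mem_range, mem_sol] at h₁ h₂
    have hp2 : (2 : ℕ) ^ (n + 2) = 2 * 2 ^ (n + 1) := by ring
    obtain ⟨⟨hs₁, ht₁⟩, hu₁, hv₁, -⟩ := h₁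
    obtain ⟨⟨hs₂, ht₂⟩, hu₂, hv₂, -⟩ := h₂
    have h1 := congrArg Prod.fst heq
    have h2 := congrArg Prod.snd heq
    simp only at h1 h2
    rcases (show s₁ = 0 ∨ s₁ = 1 by omega) with rfl | rfl <;>
      rcases (show s₂ = 0 ∨ s₂ = 1 by omega) with rfl | rfl <;>
      rcases (show t₁ = 0 ∨ t₁ = 1 by omega) with rfl | rfl <;>
      rcases (show t₂ = 0 ∨ t₂ = 1 by omega) with rfl | rfl <;>
      simp only [Prod.mk.injEq, true_and, and_true] <;> omega
  · rintro ⟨x, y⟩ hxy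
    simp only [mem_filter, mem_sol] at hxy
    obtain ⟨⟨hx, hy, hdvd⟩, hxe⟩ := hxy
    have hp2 : (2 : ℕ) ^ (n + 2) = 2 * 2 ^ (n + 1) := by ring
    have hp3 : (2 : ℕ) ^ (n + 3) = 4 * 2 ^ (n + 1) := by ring
    have ha2 : (2 : ℤ) ∣ (y : ℤ) ^ 2 - a * (x : ℤ) ^ 2 := dvd_trans ⟨2 ^ (n + 2), by ring⟩ hdvd
    have hye : y % 2 = 0 := by
      have := parity_match ha ha2
      omega
    obtain ⟨x', hx'⟩ : ∃ x', x = 2 * x' := ⟨x / 2, by omega⟩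
    obtain ⟨y', hy'⟩ : ∃ y', y = 2 * y' := ⟨y / 2, by omega⟩
    obtain ⟨u, s, hu, hs, hxd⟩ : ∃ u s, u < 2 ^ (n + 1) ∧ s < 2 ∧ x' = 2 ^ (n + 1) * s + u :=
      ⟨x' % 2 ^ (n + 1), x' / 2 ^ (n + 1), Nat.mod_lt _ hM,
        (Nat.div_lt_iff_lt_mul hM).mpr (by omega), (Nat.div_add_mod x' _).symm⟩
    obtain ⟨v, t, hv, ht, hyd⟩ : ∃ v t, v < 2 ^ (n + 1) ∧ t < 2 ∧ y' = 2 ^ (n + 1) * t + v :=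
      ⟨y' % 2 ^ (n + 1), y' / 2 ^ (n + 1), Nat.mod_lt _ hM,
        (Nat.div_lt_iff_lt_mul hM).mpr (by omega), (Nat.div_add_mod y' _).symm⟩
    refine ⟨((s, t), (u, v)), ?_, ?_⟩
    · simp only [Finset.mem_product, Finset.mem_range, mem_sol]
      refine ⟨⟨hs, ht⟩, hu, hv, ?_⟩
      obtain ⟨k, hk⟩ := hdvd
      have hxz : ((x : ℕ) : ℤ) = 2 * ((2 : ℤ) ^ (n + 1) * s + u) := by
        rw [hx', hxd]; push_cast; ring
      have hyz : ((y : ℕ) : ℤ) = 2 * ((2 : ℤ) ^ (n + 1) * t + v) := by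
        rw [hy', hyd]; push_cast; ring
      refine ⟨k - 2 * (v : ℤ) * t - (t : ℤ) ^ 2 * 2 ^ (n + 1)
          + 2 * a * (u : ℤ) * s + a * (s : ℤ) ^ 2 * 2 ^ (n + 1), ?_⟩
      have h4 : (4 : ℤ) * ((v : ℤ) ^ 2 - a * (u : ℤ) ^ 2) =
          4 * (2 ^ (n + 1) * (k - 2 * (v : ℤ) * t - (t : ℤ) ^ 2 * 2 ^ (n + 1)
            + 2 * a * (u : ℤ) * s + a * (s : ℤ) ^ 2 * 2 ^ (n + 1))) := by
        rw [hxz, hyz] at hk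
        linear_combination hk
      exact mul_left_cancel₀ (by norm_num) h4
    · simp only [Prod.mk.injEq]
      constructor <;>
        rcases (show s = 0 ∨ s = 1 by omega) with rfl | rfl <;>
        rcases (show t = 0 ∨ t = 1 by omega) with rfl | rfl <;> omega
private lemma hmul_odd {c d : ℤ} (hc : c % 2 = 1) (hd : d % 2 = 1) : (c * d) % 2 = 1 := by
  rw [Int.mul_emod, hc, hd]
  decide

private lemma mem_helper {a c : ℤ} {n u s : ℕ} (hu : u < 2 ^ (n + 2)) (hs : s < 2)
    (hc2 : (2 : ℤ) ^ (n + 3) ∣ c ^ 2 - a * (2 * (u : ℤ) + 1) ^ 2) :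
    (2 * u + 1, (c % (2 : ℤ) ^ (n + 2)).toNat + s * 2 ^ (n + 2)) ∈ sol a (n + 3) := by
  have hMz : (0 : ℤ) < 2 ^ (n + 2) := by positivity
  have hr0 : ((c % (2 : ℤ) ^ (n + 2)).toNat : ℤ) = c % 2 ^ (n + 2) :=
    Int.toNat_of_nonneg (Int.emod_nonneg c (by positivity))
  have hcast : ((2 ^ (n + 2) : ℕ) : ℤ) = (2 : ℤ) ^ (n + 2) := by push_cast; ring
  have hrlt : (c % (2 : ℤ) ^ (n + 2)).toNat < 2 ^ (n + 2) := by
    have h1 := Int.emod_lt_of_pos c hMz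
    omega
  have hp2 : (2 : ℕ) ^ (n + 3) = 2 * 2 ^ (n + 2) := by ring
  obtain ⟨K, hK⟩ : ∃ K : ℤ,
      (((c % (2 : ℤ) ^ (n + 2)).toNat + s * 2 ^ (n + 2) : ℕ) : ℤ) = c + 2 ^ (n + 2) * K :=
    ⟨(s : ℤ) - c / 2 ^ (n + 2), by push_cast; rw [hr0, Int.emod_def]; ring⟩
  simp only [mem_sol]
  refine ⟨by omega, ?_, ?_⟩
  · rcases (show s = 0 ∨ s = 1 by omega) with rfl | rfl <;> omega
  have hyx : (((c % (2 : ℤ) ^ (n + 2)).toNat + s * 2 ^ (n + 2) : ℕ) : ℤ) ^ 2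
        - a * ((2 * u + 1 : ℕ) : ℤ) ^ 2
      = (c ^ 2 - a * (2 * (u : ℤ) + 1) ^ 2) + 2 ^ (n + 3) * (K * c)
        + 2 ^ (n + 3) * (2 ^ (n + 1) * K ^ 2) := by
    rw [hK]; push_cast; ring
  rw [hyx]
  exact dvd_add (dvd_add hc2 (dvd_mul_right _ _)) (dvd_mul_right _ _)

private lemma odd_count (a b : ℤ) (n : ℕ) (ha : a % 2 = 1) (hb1 : b % 2 = 1)
    (hb : (2 : ℤ) ^ (n + 3) ∣ b ^ 2 - a) :
    ((sol a (n + 3)).filter (fun t => t.1 % 2 = 1)).card = 2 ^ (n + 4) := by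
  have hM2 : (0 : ℕ) < 2 ^ (n + 2) := pow_pos (by norm_num) _
  have hMz : (0 : ℤ) < 2 ^ (n + 2) := by positivity
  have hp2 : (2 : ℕ) ^ (n + 3) = 2 * 2 ^ (n + 2) := by ring
  have e1 : (2 : ℕ) ^ (n + 4) = (range (2 ^ (n + 2)) ×ˢ (range 2 ×ˢ range 2)).card := by
    rw [card_product, card_product, card_range, card_range]; ring
  rw [e1]
  symm
  apply Finset.card_bij (fun p _ =>
    (2 * p.1 + 1,
      (((if p.2.2 = 0 then b else -b) * (2 * (p.1 : ℤ) + 1)) % 2 ^ (n + 2)).toNat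
        + p.2.1 * 2 ^ (n + 2)))
  · rintro ⟨u, s, σ⟩ hp
    simp only [Finset.mem_product, Finset.mem_range] at hp
    obtain ⟨hu, hs, hσ⟩ := hp
    simp only [mem_filter]
    obtain ⟨j, hj⟩ := hb
    have hif0 : (if (0:ℕ) = 0 then b else -b) = b := by norm_num
    have hif1 : (if (1:ℕ) = 0 then b else -b) = -b := by norm_num
    rcases (show σ = 0 ∨ σ = 1 by omega) with rfl | rfl <;>
      simp only [hif0, hif1, if_true, if_false]
    · exact ⟨mem_helper hu hs
        ⟨j * (2 * (u : ℤ) + 1) ^ 2, by linear_combination (2 * (u : ℤ) + 1) ^ 2 * hj⟩,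
        by omega⟩
    · exact ⟨mem_helper hu hs
        ⟨j * (2 * (u : ℤ) + 1) ^ 2, by linear_combination (2 * (u : ℤ) + 1) ^ 2 * hj⟩,
        by omega⟩
  · rintro ⟨u₀, s₁, σ₁⟩ h₁ ⟨u₁, s₂, σ₂⟩ h₂ heq
    simp only [Finset.mem_product, Finset.mem_range] at h₁ h₂
    obtain ⟨hu₁, hs₁, hσ₁⟩ := h₁
    obtain ⟨hu₂, hs₂, hσ₂⟩ := h₂
    have h1 := congrArg Prod.fst heq
    have h2 := congrArg Prod.snd heq
    simp only at h1 h2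
    obtain rfl : u₀ = u₁ := by omega
    have hr0 : ∀ c : ℤ, ((c % (2 : ℤ) ^ (n + 2)).toNat : ℤ) = c % 2 ^ (n + 2) :=
      fun c => Int.toNat_of_nonneg (Int.emod_nonneg c (by positivity))
    have hcast : ((2 ^ (n + 2) : ℕ) : ℤ) = (2 : ℤ) ^ (n + 2) := by push_cast; ring
    have hrlt : ∀ c : ℤ, (c % (2 : ℤ) ^ (n + 2)).toNat < 2 ^ (n + 2) := fun c => by
      have l1 := Int.emod_lt_of_pos c hMz
      have l2 := hr0 c
      omega
    have hbX : (b * (2 * (u₀ : ℤ) + 1)) % 2 = 1 := hmul_odd hb1 (by omega)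
    have hif0 : (if (0:ℕ) = 0 then b else -b) = b := by norm_num
    have hif1 : (if (1:ℕ) = 0 then b else -b) = -b := by norm_num
    rcases (show σ₁ = 0 ∨ σ₁ = 1 by omega) with rfl | rfl <;>
        rcases (show σ₂ = 0 ∨ σ₂ = 1 by omega) with rfl | rfl <;>
        simp only [hif0, hif1, if_true, if_false] at h2
    · have l1 := hrlt (b * (2 * (u₀ : ℤ) + 1))
      rcases (show s₁ = 0 ∨ s₁ = 1 by omega) with rfl | rfl <;>
        rcases (show s₂ = 0 ∨ s₂ = 1 by omega) with rfl | rfl <;>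
        (simp only [Prod.mk.injEq]; try omega)
    · exfalso
      have l1 := hrlt (b * (2 * (u₀ : ℤ) + 1))
      have l2 := hrlt ((-b) * (2 * (u₀ : ℤ) + 1))
      have hT : ((b * (2 * (u₀ : ℤ) + 1)) % (2 : ℤ) ^ (n + 2)).toNat
          = (((-b) * (2 * (u₀ : ℤ) + 1)) % (2 : ℤ) ^ (n + 2)).toNat := by
        rcases (show s₁ = 0 ∨ s₁ = 1 by omega) with rfl | rfl <;>
          rcases (show s₂ = 0 ∨ s₂ = 1 by omega) with rfl | rfl <;> omega
      have e1' := hr0 (b * (2 * (u₀ : ℤ) + 1))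
      have e2' := hr0 ((-b) * (2 * (u₀ : ℤ) + 1))
      have he : (b * (2 * (u₀ : ℤ) + 1)) % (2 : ℤ) ^ (n + 2)
          = ((-b) * (2 * (u₀ : ℤ) + 1)) % (2 : ℤ) ^ (n + 2) := by omega
      have hd : (2 : ℤ) ^ (n + 2) ∣ (b * (2 * (u₀ : ℤ) + 1)) - ((-b) * (2 * (u₀ : ℤ) + 1)) :=
        Int.dvd_of_emod_eq_zero (Int.emod_eq_emod_iff_emod_sub_eq_zero.mp he)
      have hd2 : (2 : ℤ) * 2 ^ (n + 1) ∣ 2 * (b * (2 * (u₀ : ℤ) + 1)) := by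
        have e3 : (b * (2 * (u₀ : ℤ) + 1)) - ((-b) * (2 * (u₀ : ℤ) + 1))
            = 2 * (b * (2 * (u₀ : ℤ) + 1)) := by ring
        have e4 : (2 : ℤ) ^ (n + 2) = 2 * 2 ^ (n + 1) := by ring
        rw [e3, e4] at hd
        exact hd
      have hd3 : (2 : ℤ) ^ (n + 1) ∣ b * (2 * (u₀ : ℤ) + 1) :=
        (mul_dvd_mul_iff_left (by norm_num : (2 : ℤ) ≠ 0)).mp hd2
      have hd4 : (2 : ℤ) ∣ b * (2 * (u₀ : ℤ) + 1) := dvd_trans ⟨2 ^ n, by ring⟩ hd3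
      omega
    · exfalso
      have l1 := hrlt (b * (2 * (u₀ : ℤ) + 1))
      have l2 := hrlt ((-b) * (2 * (u₀ : ℤ) + 1))
      have hT : ((b * (2 * (u₀ : ℤ) + 1)) % (2 : ℤ) ^ (n + 2)).toNat
          = (((-b) * (2 * (u₀ : ℤ) + 1)) % (2 : ℤ) ^ (n + 2)).toNat := by
        rcases (show s₁ = 0 ∨ s₁ = 1 by omega) with rfl | rfl <;>
          rcases (show s₂ = 0 ∨ s₂ = 1 by omega) with rfl | rfl <;> omega
      have e1' := hr0 (b * (2 * (u₀ : ℤ) + 1))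
      have e2' := hr0 ((-b) * (2 * (u₀ : ℤ) + 1))
      have he : (b * (2 * (u₀ : ℤ) + 1)) % (2 : ℤ) ^ (n + 2)
          = ((-b) * (2 * (u₀ : ℤ) + 1)) % (2 : ℤ) ^ (n + 2) := by omega
      have hd : (2 : ℤ) ^ (n + 2) ∣ (b * (2 * (u₀ : ℤ) + 1)) - ((-b) * (2 * (u₀ : ℤ) + 1)) :=
        Int.dvd_of_emod_eq_zero (Int.emod_eq_emod_iff_emod_sub_eq_zero.mp he)
      have hd2 : (2 : ℤ) * 2 ^ (n + 1) ∣ 2 * (b * (2 * (u₀ : ℤ) + 1)) := by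
        have e3 : (b * (2 * (u₀ : ℤ) + 1)) - ((-b) * (2 * (u₀ : ℤ) + 1))
            = 2 * (b * (2 * (u₀ : ℤ) + 1)) := by ring
        have e4 : (2 : ℤ) ^ (n + 2) = 2 * 2 ^ (n + 1) := by ring
        rw [e3, e4] at hd
        exact hd
      have hd3 : (2 : ℤ) ^ (n + 1) ∣ b * (2 * (u₀ : ℤ) + 1) :=
        (mul_dvd_mul_iff_left (by norm_num : (2 : ℤ) ≠ 0)).mp hd2
      have hd4 : (2 : ℤ) ∣ b * (2 * (u₀ : ℤ) + 1) := dvd_trans ⟨2 ^ n, by ring⟩ hd3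
      omega
    · have l1 := hrlt ((-b) * (2 * (u₀ : ℤ) + 1))
      rcases (show s₁ = 0 ∨ s₁ = 1 by omega) with rfl | rfl <;>
        rcases (show s₂ = 0 ∨ s₂ = 1 by omega) with rfl | rfl <;>
        (simp only [Prod.mk.injEq]; try omega)
  · rintro ⟨x, y⟩ hxy
    simp only [mem_filter, mem_sol] at hxy
    obtain ⟨⟨hx, hy, hdvd⟩, hxo⟩ := hxy
    have hyo : y % 2 = 1 := by
      have h2 : (2 : ℤ) ∣ (y : ℤ) ^ 2 - a * (x : ℤ) ^ 2 := dvd_trans ⟨2 ^ (n + 2), by ring⟩ hdvd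
      have := parity_match ha h2
      omega
    obtain ⟨u, rfl⟩ : ∃ u, x = 2 * u + 1 := ⟨x / 2, by omega⟩
    have hu : u < 2 ^ (n + 2) := by omega
    have hX : ((2 * u + 1 : ℕ) : ℤ) = 2 * (u : ℤ) + 1 := by push_cast; ring
    rw [hX] at hdvd
    have h1 : (2 : ℤ) ^ (n + 3) ∣
        (b * (2 * (u : ℤ) + 1) - (y : ℤ)) * (b * (2 * (u : ℤ) + 1) + (y : ℤ)) := by
      have e : (b * (2 * (u : ℤ) + 1) - (y : ℤ)) * (b * (2 * (u : ℤ) + 1) + (y : ℤ))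
          = (b ^ 2 - a) * (2 * (u : ℤ) + 1) ^ 2
            - ((y : ℤ) ^ 2 - a * (2 * (u : ℤ) + 1) ^ 2) := by ring
      rw [e]
      exact dvd_sub (hb.mul_right _) hdvd
    have hbX : (b * (2 * (u : ℤ) + 1)) % 2 = 1 := hmul_odd hb1 (by omega)
    have hyz : ((y : ℕ) : ℤ) % 2 = 1 := by omega
    obtain ⟨p', hp'⟩ : ∃ p', b * (2 * (u : ℤ) + 1) - (y : ℤ) = 2 * p' :=
      ⟨(b * (2 * (u : ℤ) + 1) - (y : ℤ)) / 2, by omega⟩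
    obtain ⟨q', hq'⟩ : ∃ q', b * (2 * (u : ℤ) + 1) + (y : ℤ) = 2 * q' :=
      ⟨(b * (2 * (u : ℤ) + 1) + (y : ℤ)) / 2, by omega⟩
    have h4 : (2 : ℤ) ^ (n + 1) ∣ p' * q' := by
      have e4 : (4 : ℤ) * 2 ^ (n + 1) ∣ 4 * (p' * q') := by
        have e5 : (4 : ℤ) * (p' * q')
            = (b * (2 * (u : ℤ) + 1) - (y : ℤ)) * (b * (2 * (u : ℤ) + 1) + (y : ℤ)) := by
          rw [hp', hq']; ring
        rw [e5, show (4 : ℤ) * 2 ^ (n + 1) = 2 ^ (n + 3) from by ring]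
        exact h1
      exact (mul_dvd_mul_iff_left (by norm_num : (4 : ℤ) ≠ 0)).mp e4
    obtain ⟨s, hs, hsd⟩ : ∃ s, s < 2 ∧ y = 2 ^ (n + 2) * s + y % 2 ^ (n + 2) :=
      ⟨y / 2 ^ (n + 2), (Nat.div_lt_iff_lt_mul hM2).mpr (by omega), (Nat.div_add_mod y _).symm⟩
    have hcast : ((2 ^ (n + 2) : ℕ) : ℤ) = (2 : ℤ) ^ (n + 2) := by push_cast; ring
    have hymod : ((y : ℕ) : ℤ) % (2 : ℤ) ^ (n + 2) = ((y % 2 ^ (n + 2) : ℕ) : ℤ) := by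
      push_cast; ring
    rcases Int.emod_two_eq p' with hp0 | hp1
    · have hq1 : q' % 2 = 1 := by omega
      have hcop : IsCoprime ((2 : ℤ) ^ (n + 1)) q' :=
        (Int.prime_two.coprime_iff_not_dvd.mpr (by omega)).pow_left
      obtain ⟨d, hd⟩ : (2 : ℤ) ^ (n + 1) ∣ p' := hcop.dvd_of_dvd_mul_right h4
      have h6 : (2 : ℤ) ^ (n + 2) ∣ b * (2 * (u : ℤ) + 1) - (y : ℤ) :=
        ⟨d, by rw [hp', hd]; ring⟩
      have he : (b * (2 * (u : ℤ) + 1)) % (2 : ℤ) ^ (n + 2) = ((y : ℕ) : ℤ) % (2 : ℤ) ^ (n + 2) :=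
        Int.emod_eq_emod_iff_emod_sub_eq_zero.mpr (Int.emod_eq_zero_of_dvd h6)
      have hr0 : (((b * (2 * (u : ℤ) + 1)) % (2 : ℤ) ^ (n + 2)).toNat : ℤ)
          = (b * (2 * (u : ℤ) + 1)) % (2 : ℤ) ^ (n + 2) :=
        Int.toNat_of_nonneg (Int.emod_nonneg _ (by positivity))
      have h7 : ((b * (2 * (u : ℤ) + 1)) % (2 : ℤ) ^ (n + 2)).toNat = y % 2 ^ (n + 2) := by
        rw [he, hymod] at hr0
        omega
      refine ⟨(u, (s, 0)), ?_, ?_⟩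
      · simp only [Finset.mem_product, Finset.mem_range]
        exact ⟨hu, hs, by omega⟩
      · have hif0 : (if (0:ℕ) = 0 then b else -b) = b := by norm_num
        simp only [Prod.mk.injEq, hif0, if_true, if_false]
        refine ⟨by trivial, ?_⟩
        rcases (show s = 0 ∨ s = 1 by omega) with rfl | rfl <;> omega
    · have hq0 : q' % 2 = 0 := by omega
      have hcop : IsCoprime ((2 : ℤ) ^ (n + 1)) p' :=
        (Int.prime_two.coprime_iff_not_dvd.mpr (by omega)).pow_left
      obtain ⟨d, hd⟩ : (2 : ℤ) ^ (n + 1) ∣ q' := hcop.dvd_of_dvd_mul_left h4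
      have h6 : (2 : ℤ) ^ (n + 2) ∣ (-b) * (2 * (u : ℤ) + 1) - (y : ℤ) :=
        ⟨-d, by rw [show (-b) * (2 * (u : ℤ) + 1) - (y : ℤ)
            = -(b * (2 * (u : ℤ) + 1) + (y : ℤ)) from by ring, hq', hd]; ring⟩
      have he : ((-b) * (2 * (u : ℤ) + 1)) % (2 : ℤ) ^ (n + 2)
          = ((y : ℕ) : ℤ) % (2 : ℤ) ^ (n + 2) :=
        Int.emod_eq_emod_iff_emod_sub_eq_zero.mpr (Int.emod_eq_zero_of_dvd h6)
      have hr0 : ((((-b) * (2 * (u : ℤ) + 1)) % (2 : ℤ) ^ (n + 2)).toNat : ℤ)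
          = ((-b) * (2 * (u : ℤ) + 1)) % (2 : ℤ) ^ (n + 2) :=
        Int.toNat_of_nonneg (Int.emod_nonneg _ (by positivity))
      have h7 : (((-b) * (2 * (u : ℤ) + 1)) % (2 : ℤ) ^ (n + 2)).toNat = y % 2 ^ (n + 2) := by
        rw [he, hymod] at hr0
        omega
      refine ⟨(u, (s, 1)), ?_, ?_⟩
      · simp only [Finset.mem_product, Finset.mem_range]
        exact ⟨hu, hs, by omega⟩
      · have hif1 : (if (1:ℕ) = 0 then b else -b) = -b := by norm_num
        simp only [Prod.mk.injEq, hif1, if_true, if_false]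
        refine ⟨by trivial, ?_⟩
        rcases (show s = 0 ∨ s = 1 by omega) with rfl | rfl <;> omega
private lemma key (a : ℤ) (ha : a % 8 = 1) : ∀ ν : ℕ, 1 ≤ ν → (sol a ν).card = ν * 2 ^ ν := by
  intro ν
  induction ν using Nat.strong_induction_on with
  | _ ν ih =>
    intro hν
    rcases ν with _ | (_ | (_ | n))
    · exact absurd hν (by omega)
    · rw [base1 a ha]; norm_num
    · rw [base2 a ha]; norm_num
    · have ho : a % 2 = 1 := by omega
      obtain ⟨b, hb1, hb2⟩ := exists_sqrt a ha (n + 3)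
      have hsplit := Finset.card_filter_add_card_filter_not
        (s := sol a (n + 3)) (p := fun t => t.1 % 2 = 0)
      have heven := even_count a ho n
      have hodd := odd_count a b n ho hb1 hb2
      have hih := ih (n + 1) (by omega) (by omega)
      have hco : (sol a (n + 3)).filter (fun t => ¬ t.1 % 2 = 0)
          = (sol a (n + 3)).filter (fun t => t.1 % 2 = 1) := by
        apply filter_congr
        intro t _
        constructor
        · intro h; omega
        · intro h; omega
      rw [hco, heven, hodd, hih] at hsplit
      rw [← hsplit]
      ring

/-- For `ν ≥ 1` and `a ≡ 1 (mod 8)`, the number of pairs `(γ₁, γ₂)` mod `2^ν` with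
`a γ₁² ≡ γ₂² (mod 2^ν)` equals `ν · 2^ν`. -/
theorem stmt9 (ν : ℕ) (hν : 1 ≤ ν) (a : ℤ) (ha : a % 8 = 1) :
    ((Finset.range (2 ^ ν) ×ˢ Finset.range (2 ^ ν)).filter
        (fun t : ℕ × ℕ =>
          (a * (t.1 : ℤ) ^ 2) % ((2 : ℤ) ^ ν) = ((t.2 : ℤ) ^ 2) % ((2 : ℤ) ^ ν))).card
      = ν * 2 ^ ν := by
  have h : ((Finset.range (2 ^ ν) ×ˢ Finset.range (2 ^ ν)).filter
        (fun t : ℕ × ℕ =>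
          (a * (t.1 : ℤ) ^ 2) % ((2 : ℤ) ^ ν) = ((t.2 : ℤ) ^ 2) % ((2 : ℤ) ^ ν)))
      = sol a ν := by
    unfold sol
    apply filter_congr
    rintro ⟨x, y⟩ -
    simp only
    rw [Int.emod_eq_emod_iff_emod_sub_eq_zero, ← Int.dvd_iff_emod_eq_zero,
      show a * (x : ℤ) ^ 2 - (y : ℤ) ^ 2 = -((y : ℤ) ^ 2 - a * (x : ℤ) ^ 2) from by ring,
      dvd_neg]
  rw [h]
  exact key a ha ν hν
end

section
/- Let d₁ = r₁² + s₁² and d₂ = r₂² + s₂² with gcd(r_j, s_j) = 1, −s_j < r_j ≤ s_j, r₁, r₂ of the same sign, and 2/3 ≤ s₁/s₂ ≤ 3/2. Let ν_j be the root mod d_j determined by ν_j · s_j ≡ r_j (mod d_j) (so ν_j² + 1 ≡ 0 mod d_j). If ν₁/d₁ ≢ ν₂/d₂ (mod 1), then the distance from ν₁/d₁ − ν₂/d₂ to the nearest integer exceeds 1/(4·√(d₁·d₂)). -/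
/-!
Write `ν s - r = d a`. Then `ν/d = r/(s d) + a/s` with `a` prime to `s` (as `a r ≡ -1 mod s`), so
`ν₁/d₁ - ν₂/d₂ - m = t₁ - t₂ + K/(s₁ s₂)` for an integer `K`, where `t = r/(s d)`.
If `K ≠ 0`, then `|K/(s₁ s₂)| ≥ 1/(s₁ s₂)`, while `t₁, t₂` have the same sign and, by `2|r|s ≤ d` and
the ratio bound, both have size at most `3/(4 s₁ s₂)`; this leaves `1/(4 s₁ s₂) > 1/(4√(d₁ d₂))`.
If `K = 0`, the reduced fractions `a₁/s₁ ≡ a₂/s₂` force `s₁ = s₂` and `a₁ ≡ a₂`, hence `r₁ ≡ r₂ (mod s)`,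
so `r₁ = r₂` by the sign and range conditions, and then `ν₁ ≡ ν₂ (mod d)`: the fractions coincide mod 1.
-/

namespace SumTwoSquaresRoot

/-- The term `r/(s d)` of `ν/d ≡ r/(s d) - r̄/s (mod 1)`. -/
noncomputable def offset (x y : ℝ) : ℝ := x / (y * (x ^ 2 + y ^ 2))

theorem div_sq_add_sq_eq_offset_add {x y ν a : ℝ} (hy : y ≠ 0)
    (h : ν * y - x = (x ^ 2 + y ^ 2) * a) : ν / (x ^ 2 + y ^ 2) = offset x y + a / y := by
  have hd : x ^ 2 + y ^ 2 ≠ 0 := by positivity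
  rw [offset]
  field_simp
  linear_combination h

theorem abs_offset_le (x : ℝ) {y : ℝ} (hy : 0 < y) : |offset x y| ≤ 1 / (2 * y ^ 2) := by
  have hd : 0 < y * (x ^ 2 + y ^ 2) := by positivity
  rw [offset, abs_div, abs_of_pos hd, div_le_div_iff₀ hd (by positivity)]
  nlinarith [two_mul_le_add_sq |x| y, sq_abs x, abs_nonneg x]

theorem abs_offset_le_of_two_mul_le (x : ℝ) {y y' : ℝ} (hy : 0 < y) (hy' : 0 < y')
    (h : 2 * y' ≤ 3 * y) : |offset x y| ≤ 3 / (4 * (y * y')) := by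
  refine (abs_offset_le x hy).trans ?_
  rw [div_le_div_iff₀ (by positivity) (by positivity)]
  nlinarith

theorem offset_mul_offset_nonneg {x₁ x₂ y₁ y₂ : ℝ} (hy₁ : 0 < y₁) (hy₂ : 0 < y₂)
    (hx : 0 < x₁ * x₂) :
    0 ≤ offset x₁ y₁ * offset x₂ y₂ := by
  rw [offset, offset, div_mul_div_comm]
  positivity

theorem abs_sub_le_of_mul_nonneg {a b c : ℝ} (hab : 0 ≤ a * b) (ha : |a| ≤ c) (hb : |b| ≤ c) :
    |a - b| ≤ c := by
  rw [abs_le] at ha hb ⊢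
  rcases mul_nonneg_iff.1 hab with ⟨ha₀, hb₀⟩ | ⟨ha₀, hb₀⟩ <;> constructor <;> linarith

theorem mul_lt_sqrt_mul_sq_add_sq {x₁ x₂ y₁ y₂ : ℝ} (hy₁ : 0 < y₁) (hy₂ : 0 < y₂)
    (hx : x₁ * x₂ ≠ 0) : y₁ * y₂ < √((x₁ ^ 2 + y₁ ^ 2) * (x₂ ^ 2 + y₂ ^ 2)) := by
  rw [Real.lt_sqrt (by positivity)]
  have : 0 < (x₁ * x₂) ^ 2 := by positivity
  nlinarith [sq_nonneg (x₁ * y₂), sq_nonneg (y₁ * x₂)]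

theorem one_div_four_mul_sqrt_lt_abs_offset_sub_offset_add {x₁ y₁ x₂ y₂ : ℝ}
    (hy₁ : 0 < y₁) (hy₂ : 0 < y₂) (hx : 0 < x₁ * x₂)
    (hratio : 2 / 3 ≤ y₁ / y₂ ∧ y₁ / y₂ ≤ 3 / 2) {K : ℤ} (hK : K ≠ 0) :
    1 / (4 * √((x₁ ^ 2 + y₁ ^ 2) * (x₂ ^ 2 + y₂ ^ 2)))
      < |offset x₁ y₁ - offset x₂ y₂ + K / (y₁ * y₂)| := by
  have hS : 0 < y₁ * y₂ := mul_pos hy₁ hy₂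
  rw [le_div_iff₀ hy₂, div_le_iff₀ hy₂] at hratio
  have hoffset : |offset x₁ y₁ - offset x₂ y₂| ≤ 3 / (4 * (y₁ * y₂)) := by
    refine abs_sub_le_of_mul_nonneg (offset_mul_offset_nonneg hy₁ hy₂ hx)
      (abs_offset_le_of_two_mul_le x₁ hy₁ hy₂ (by linarith)) ?_
    rw [mul_comm y₁]
    exact abs_offset_le_of_two_mul_le x₂ hy₂ hy₁ (by linarith)
  have hKS : 1 / (y₁ * y₂) ≤ |(K : ℝ) / (y₁ * y₂)| := by
    rw [abs_div, abs_of_pos hS]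
    gcongr
    exact_mod_cast Int.one_le_abs hK
  calc 1 / (4 * √((x₁ ^ 2 + y₁ ^ 2) * (x₂ ^ 2 + y₂ ^ 2)))
      < 1 / (4 * (y₁ * y₂)) := by gcongr; exact mul_lt_sqrt_mul_sq_add_sq hy₁ hy₂ hx.ne'
    _ = 1 / (y₁ * y₂) - 3 / (4 * (y₁ * y₂)) := by field_simp; norm_num
    _ ≤ |(K : ℝ) / (y₁ * y₂)| - |offset x₁ y₁ - offset x₂ y₂| := by linarith
    _ ≤ |offset x₁ y₁ - offset x₂ y₂ + K / (y₁ * y₂)| := by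
      rw [add_comm]; exact abs_sub_abs_le_abs_add _ _

theorem dvd_mul_add_one {r s ν a : ℤ} (hrs : IsCoprime r s)
    (h : ν * s - r = (r ^ 2 + s ^ 2) * a) : s ∣ a * r + 1 :=
  hrs.symm.dvd_of_dvd_mul_left ⟨ν - a * s, by linear_combination -h⟩

theorem isCoprime_of_dvd_mul_add_one {a r s : ℤ} (h : s ∣ a * r + 1) : IsCoprime a s := by
  obtain ⟨c, hc⟩ := h
  exact ⟨-r, c, by linear_combination -hc⟩

theorem eq_of_sub_eq_mul_of_isCoprime {a₁ a₂ s₁ s₂ m : ℤ} (hs₁ : 0 < s₁) (hs₂ : 0 < s₂)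
    (h₁ : IsCoprime a₁ s₁) (h₂ : IsCoprime a₂ s₂) (h : s₂ * a₁ - s₁ * a₂ = m * (s₁ * s₂)) :
    s₁ = s₂ ∧ a₁ = a₂ + m * s₁ := by
  have hs : s₁ = s₂ := Int.dvd_antisymm hs₁.le hs₂.le
    (h₁.symm.dvd_of_dvd_mul_right ⟨a₂ + m * s₂, by linear_combination h⟩)
    (h₂.symm.dvd_of_dvd_mul_right ⟨a₁ - m * s₁, by linear_combination -h⟩)
  subst hs
  exact ⟨rfl, mul_left_cancel₀ hs₁.ne' (by linear_combination h)⟩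

theorem eq_of_dvd_sub_of_mul_pos {r₁ r₂ s : ℤ} (hsign : 0 < r₁ * r₂)
    (hr₁ : -s < r₁ ∧ r₁ ≤ s) (hr₂ : -s < r₂ ∧ r₂ ≤ s) (h : s ∣ r₁ - r₂) : r₁ = r₂ := by
  refine sub_eq_zero.1 (Int.eq_zero_of_abs_lt_dvd h (abs_lt.2 ?_))
  rcases pos_and_pos_or_neg_and_neg_of_mul_pos hsign with h | h <;> omega

theorem dvd_sub_of_dvd_mul_sub {r s ν₁ ν₂ a₁ a₂ : ℤ} (hrs : IsCoprime r s)
    (h₁ : ν₁ * s - r = (r ^ 2 + s ^ 2) * a₁) (h₂ : ν₂ * s - r = (r ^ 2 + s ^ 2) * a₂) :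
    r ^ 2 + s ^ 2 ∣ ν₁ - ν₂ := by
  have hcop : IsCoprime (r ^ 2 + s ^ 2) s := by
    simpa only [← sq] using hrs.pow_left.add_mul_left_left s
  exact hcop.dvd_of_dvd_mul_right ⟨a₁ - a₂, by linear_combination h₁ - h₂⟩

theorem eq_and_dvd_sub_of_sub_eq_mul {r₁ s₁ r₂ s₂ ν₁ ν₂ a₁ a₂ m : ℤ}
    (hrs₁ : IsCoprime r₁ s₁) (hrs₂ : IsCoprime r₂ s₂)
    (hr₁ : -s₁ < r₁ ∧ r₁ ≤ s₁) (hr₂ : -s₂ < r₂ ∧ r₂ ≤ s₂) (hsign : 0 < r₁ * r₂)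
    (ha₁ : ν₁ * s₁ - r₁ = (r₁ ^ 2 + s₁ ^ 2) * a₁) (ha₂ : ν₂ * s₂ - r₂ = (r₂ ^ 2 + s₂ ^ 2) * a₂)
    (h : s₂ * a₁ - s₁ * a₂ = m * (s₁ * s₂)) :
    r₁ = r₂ ∧ s₁ = s₂ ∧ r₁ ^ 2 + s₁ ^ 2 ∣ ν₁ - ν₂ := by
  have hd₁ := dvd_mul_add_one hrs₁ ha₁
  have hd₂ := dvd_mul_add_one hrs₂ ha₂
  obtain ⟨rfl, ha⟩ := eq_of_sub_eq_mul_of_isCoprime (by omega) (by omega)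
    (isCoprime_of_dvd_mul_add_one hd₁) (isCoprime_of_dvd_mul_add_one hd₂) h
  have hr : s₁ ∣ a₁ * (r₁ - r₂) := by
    have e : a₁ * (r₁ - r₂) = (a₁ * r₁ + 1) - (a₂ * r₂ + 1) - s₁ * (m * r₂) := by
      linear_combination (-r₂) * ha
    exact e ▸ dvd_sub (dvd_sub hd₁ hd₂) (dvd_mul_right s₁ (m * r₂))
  obtain rfl := eq_of_dvd_sub_of_mul_pos hsign hr₁ hr₂
    ((isCoprime_of_dvd_mul_add_one hd₁).symm.dvd_of_dvd_mul_left hr)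
  exact ⟨rfl, rfl, dvd_sub_of_dvd_mul_sub hrs₁ ha₁ ha₂⟩

end SumTwoSquaresRoot

open SumTwoSquaresRoot in
theorem stmt11_general (r₁ s₁ r₂ s₂ ν₁ ν₂ : ℤ)
    (h₁ : Int.gcd r₁ s₁ = 1) (h₂ : Int.gcd r₂ s₂ = 1)
    (hr₁ : -s₁ < r₁ ∧ r₁ ≤ s₁) (hr₂ : -s₂ < r₂ ∧ r₂ ≤ s₂)
    (hsign : 0 < r₁ * r₂)
    (hratio : (2 : ℝ) / 3 ≤ (s₁ : ℝ) / (s₂ : ℝ) ∧ (s₁ : ℝ) / (s₂ : ℝ) ≤ 3 / 2)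
    (hν₁ : (r₁ ^ 2 + s₁ ^ 2) ∣ (ν₁ * s₁ - r₁))
    (hν₂ : (r₂ ^ 2 + s₂ ^ 2) ∣ (ν₂ * s₂ - r₂))
    (hdistinct : ∀ m : ℤ,
      (ν₁ : ℝ) / ((r₁ : ℝ) ^ 2 + (s₁ : ℝ) ^ 2) - (ν₂ : ℝ) / ((r₂ : ℝ) ^ 2 + (s₂ : ℝ) ^ 2)
        ≠ (m : ℝ)) :
    ∀ m : ℤ,
      1 / (4 * Real.sqrt (((r₁ : ℝ) ^ 2 + (s₁ : ℝ) ^ 2) * ((r₂ : ℝ) ^ 2 + (s₂ : ℝ) ^ 2)))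
        < |(ν₁ : ℝ) / ((r₁ : ℝ) ^ 2 + (s₁ : ℝ) ^ 2)
            - (ν₂ : ℝ) / ((r₂ : ℝ) ^ 2 + (s₂ : ℝ) ^ 2) - (m : ℝ)| := by
  intro m
  obtain ⟨a₁, ha₁⟩ := hν₁
  obtain ⟨a₂, ha₂⟩ := hν₂
  have hs₁ : (0 : ℝ) < s₁ := by exact_mod_cast (by omega : 0 < s₁)
  have hs₂ : (0 : ℝ) < s₂ := by exact_mod_cast (by omega : 0 < s₂)
  have hsplit : (ν₁ : ℝ) / ((r₁ : ℝ) ^ 2 + (s₁ : ℝ) ^ 2)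
      - (ν₂ : ℝ) / ((r₂ : ℝ) ^ 2 + (s₂ : ℝ) ^ 2) - m = offset r₁ s₁ - offset r₂ s₂
        + ((s₂ * a₁ - s₁ * a₂ - m * (s₁ * s₂) : ℤ) : ℝ) / (s₁ * s₂) := by
    have ha₁' : (ν₁ : ℝ) * s₁ - r₁ = ((r₁ : ℝ) ^ 2 + (s₁ : ℝ) ^ 2) * a₁ := by exact_mod_cast ha₁
    have ha₂' : (ν₂ : ℝ) * s₂ - r₂ = ((r₂ : ℝ) ^ 2 + (s₂ : ℝ) ^ 2) * a₂ := by exact_mod_cast ha₂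
    rw [div_sq_add_sq_eq_offset_add hs₁.ne' ha₁', div_sq_add_sq_eq_offset_add hs₂.ne' ha₂']
    push_cast
    field_simp
    ring
  rcases eq_or_ne (s₂ * a₁ - s₁ * a₂ - m * (s₁ * s₂)) 0 with hK | hK
  · obtain ⟨rfl, rfl, c, hc⟩ := eq_and_dvd_sub_of_sub_eq_mul
      (Int.isCoprime_iff_gcd_eq_one.2 h₁) (Int.isCoprime_iff_gcd_eq_one.2 h₂)
      hr₁ hr₂ hsign ha₁ ha₂ (m := m) (by linear_combination hK)
    refine absurd ?_ (hdistinct c)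
    rw [div_sub_div_same, div_eq_iff (by positivity)]
    exact_mod_cast hc.trans (mul_comm _ _)
  · rw [hsplit]
    exact one_div_four_mul_sqrt_lt_abs_offset_sub_offset_add hs₁ hs₂
      (by exact_mod_cast hsign) hratio hK

/-- Spacing of the fractions `ν/d` for roots of `ν² + 1 ≡ 0 (mod d)`, `d = r² + s²`.
If the two fractions are distinct mod 1, with `r₁, r₂` of the same sign and
`2/3 ≤ s₁/s₂ ≤ 3/2`, then their distance to any integer translate exceeds
`1/(4√(d₁ d₂))`. -/
theorem stmt11 (r₁ s₁ r₂ s₂ ν₁ ν₂ : ℤ)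
    (h₁ : Int.gcd r₁ s₁ = 1) (h₂ : Int.gcd r₂ s₂ = 1)
    (hr₁ : -s₁ < r₁ ∧ r₁ ≤ s₁) (hr₂ : -s₂ < r₂ ∧ r₂ ≤ s₂)
    (hsign : 0 < r₁ * r₂)
    (hratio : (2 : ℝ) / 3 ≤ (s₁ : ℝ) / (s₂ : ℝ) ∧ (s₁ : ℝ) / (s₂ : ℝ) ≤ 3 / 2)
    (hν₁ : (r₁ ^ 2 + s₁ ^ 2) ∣ (ν₁ * s₁ - r₁))
    (hν₂ : (r₂ ^ 2 + s₂ ^ 2) ∣ (ν₂ * s₂ - r₂))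
    (hroot₁ : (r₁ ^ 2 + s₁ ^ 2) ∣ (ν₁ ^ 2 + 1))
    (hroot₂ : (r₂ ^ 2 + s₂ ^ 2) ∣ (ν₂ ^ 2 + 1))
    (hdistinct : ∀ m : ℤ,
      (ν₁ : ℝ) / ((r₁ : ℝ) ^ 2 + (s₁ : ℝ) ^ 2) - (ν₂ : ℝ) / ((r₂ : ℝ) ^ 2 + (s₂ : ℝ) ^ 2)
        ≠ (m : ℝ)) :
    ∀ m : ℤ,
      1 / (4 * Real.sqrt (((r₁ : ℝ) ^ 2 + (s₁ : ℝ) ^ 2) * ((r₂ : ℝ) ^ 2 + (s₂ : ℝ) ^ 2)))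
        < |(ν₁ : ℝ) / ((r₁ : ℝ) ^ 2 + (s₁ : ℝ) ^ 2)
            - (ν₂ : ℝ) / ((r₂ : ℝ) ^ 2 + (s₂ : ℝ) ^ 2) - (m : ℝ)| :=
  stmt11_general r₁ s₁ r₂ s₂ ν₁ ν₂ h₁ h₂ hr₁ hr₂ hsign hratio hν₁ hν₂ hdistinct
end

section
/- Let q be an odd positive integer and ω an integer with ω² + 1 ≡ 0 (mod q). Define ξ: ℤ[i] → ℤ by ξ(r + is) = Jacobi symbol ((r + ω·s)/q). Then ξ is completely multiplicative: ξ(z₁·z₂) = ξ(z₁)·ξ(z₂) for all Gaussian integers z₁, z₂. -/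
/-- For `q` odd with `ω² + 1 ≡ 0 (mod q)`, the function
`ξ(r + is) = ((r + ω s)/q)` (Jacobi symbol) is completely multiplicative on `ℤ[i]`. -/
theorem stmt12 (q : ℕ) (hq : Odd q) (hq0 : 0 < q) (ω : ℤ)
    (hω : (q : ℤ) ∣ (ω ^ 2 + 1)) (z₁ z₂ : GaussianInt) :
    jacobiSym ((z₁ * z₂).re + ω * (z₁ * z₂).im) q
      = jacobiSym (z₁.re + ω * z₁.im) q * jacobiSym (z₂.re + ω * z₂.im) q := by
  rw [← jacobiSym.mul_left]
  apply jacobiSym.mod_left'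
  have h : ((z₁.re + ω * z₁.im) * (z₂.re + ω * z₂.im) : ℤ)
      - ((z₁ * z₂).re + ω * (z₁ * z₂).im)
      = (z₁.im * z₂.im) * (ω ^ 2 + 1) := by
    simp [Zsqrtd.re_mul, Zsqrtd.im_mul]; ring
  exact Int.modEq_iff_dvd.2 (h ▸ Dvd.dvd.mul_left hω _)
end

section
/- Let q be an odd positive integer with ω² + 1 ≡ 0 (mod q) and ξ(r + is) = ((r + ω s)/q) the associated character on ℤ[i]. Then ξ(i) = 1 if q ≡ 1 (mod 8) and ξ(i) = −1 if q ≡ 5 (mod 8). -/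
/-- For `q` odd with `ω² + 1 ≡ 0 (mod q)` and `ξ(r+is) = ((r+ωs)/q)`, one has
`ξ(i) = (ω/q) = 1` if `q ≡ 1 (mod 8)` and `= -1` if `q ≡ 5 (mod 8)`. -/
theorem stmt13 (q : ℕ) (hq : Odd q) (hq0 : 0 < q) (ω : ℤ)
    (hω : (q : ℤ) ∣ (ω ^ 2 + 1)) :
    (q % 8 = 1 → jacobiSym ω q = 1) ∧ (q % 8 = 5 → jacobiSym ω q = -1) := by
  obtain ⟨k, hk⟩ := hω
  obtain ⟨m, hm⟩ := hq
  have hcω : IsCoprime ω (q : ℤ) := ⟨-ω, k, by linarith⟩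
  have hc2 : IsCoprime (2 : ℤ) (q : ℤ) := ⟨-(m : ℤ), 1, by push_cast [hm]; ring⟩
  have hc2ω : IsCoprime (2 * ω) (q : ℤ) := hc2.mul_left hcω
  have hsq' : (1 + ω) ^ 2 = 2 * ω + (q : ℤ) * k := by
    rw [← hk]; ring
  have hc1ω : IsCoprime (1 + ω) (q : ℤ) := by
    have h := hc2ω.add_mul_left_left k
    rw [← hsq'] at h
    exact (IsCoprime.pow_left_iff two_pos).mp h
  have hcong : (2 * ω) % (q : ℤ) = ((1 + ω) ^ 2) % (q : ℤ) := by
    rw [hsq', Int.add_mul_emod_self_left]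
  have h1 : jacobiSym (2 * ω) q = 1 := by
    rw [jacobiSym.mod_left' hcong]
    exact jacobiSym.sq_one' (Int.isCoprime_iff_gcd_eq_one.mp hc1ω)
  rw [jacobiSym.mul_left] at h1
  have h2 : jacobiSym 2 q = ZMod.χ₈ q := jacobiSym.at_two ⟨m, hm⟩
  have hsq : jacobiSym 2 q ^ 2 = 1 :=
    jacobiSym.sq_one (Int.isCoprime_iff_gcd_eq_one.mp hc2)
  have hωval : jacobiSym ω q = jacobiSym 2 q := by
    nlinarith [sq_nonneg (jacobiSym 2 q - jacobiSym ω q)]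
  rw [hωval, h2, ZMod.χ₈_nat_eq_if_mod_eight]
  have h2q : q % 2 = 1 := Nat.odd_iff.mp ⟨m, hm⟩
  constructor <;> intro h <;> simp [h] <;> omega
end

section
/- Let w and z be Gaussian integers that are primary (≡ 1 mod 2(1+i)) and primitive (gcd of real and imaginary parts equal to 1). Define the Dirichlet symbol (z/w) := Jacobi symbol ((Re(w·z))/(|w|²)). Then the reciprocity (z/w) = (w/z) holds. -/
/-!
Put `a + bi := wz`, so that `a² + b² = |w|²|z|²` and `a` is odd, `b` even. If `a` is prime to
`|w|²|z|²`, quadratic reciprocity gives `(a / |w|²|z|²) = (|w|²|z|² / |a|) = (b² / |a|) = 1`, so the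
two factors `(a / |w|²)` and `(a / |z|²)` are units with product `1`, hence equal. Otherwise both
vanish: by primitivity, a prime dividing `a` and one of the norms divides the other norm too.
-/

/-- A Gaussian integer `z = r + is` is primary if `r` is odd and `s ≡ r - 1 (mod 4)`,
i.e. `z ≡ 1 (mod 2(1+i))`. -/
def GaussianInt.IsPrimary (z : GaussianInt) : Prop :=
  Odd z.re ∧ (4 : ℤ) ∣ (z.im - (z.re - 1))

theorem jacobiSym_eq_one_of_sq_add_sq {a b : ℤ} {n : ℕ} (ha : Odd a) (hb : Even b)
    (hn : a ^ 2 + b ^ 2 = n) (hcop : IsCoprime a n) : jacobiSym a n = 1 := by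
  have hn4 : n % 4 = 1 := by
    obtain ⟨k, rfl⟩ := ha
    obtain ⟨m, rfl⟩ := hb
    have : (n : ℤ) = 4 * (k ^ 2 + k + m ^ 2) + 1 := by rw [← hn]; ring
    omega
  have hsign : jacobiSym a n = jacobiSym (a.natAbs : ℤ) n := by
    rcases abs_choice a with h | h <;> rw [Int.natCast_natAbs, h]
    rw [jacobiSym.neg _ (Nat.odd_iff.mpr (by omega)), ZMod.χ₄_nat_one_mod_four hn4, one_mul]
  have hmod : (n : ℤ) % (a.natAbs : ℕ) = b ^ 2 % (a.natAbs : ℕ) :=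
    Int.ModEq.symm <| Int.modEq_iff_dvd.mpr <| by
      rw [← hn, add_sub_cancel_right, Int.natCast_natAbs]
      exact (abs_dvd_self a).trans (Dvd.intro_left _ (sq a).symm)
  have hbcop : Int.gcd b (a.natAbs : ℕ) = 1 := by
    rw [← Int.isCoprime_iff_gcd_eq_one, Int.natCast_natAbs, IsCoprime.abs_right_iff]
    rw [← hn, add_comm, sq a] at hcop
    exact ((IsCoprime.pow_right_iff two_pos).mp hcop.of_add_mul_left_right).symm
  rw [hsign, jacobiSym.quadratic_reciprocity_one_mod_four' (Int.natAbs_odd.mpr ha) hn4,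
    jacobiSym.mod_left' hmod, jacobiSym.sq_one' hbcop]

namespace GaussianInt

theorem IsPrimary.even_im {z : GaussianInt} (hz : z.IsPrimary) : Even z.im := by
  obtain ⟨⟨k, hk⟩, ⟨t, ht⟩⟩ := hz
  exact ⟨2 * t + k, by omega⟩

theorem IsPrimary.mul {w z : GaussianInt} (hw : w.IsPrimary) (hz : z.IsPrimary) :
    (w * z).IsPrimary := by
  obtain ⟨⟨k, hk⟩, ⟨t, ht⟩⟩ := hw
  obtain ⟨⟨k', hk'⟩, ⟨t', ht'⟩⟩ := hz
  have hs : w.im = 2 * k + 4 * t := by omega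
  have hs' : z.im = 2 * k' + 4 * t' := by omega
  simp only [IsPrimary, Zsqrtd.re_mul, Zsqrtd.im_mul, hk, hk', hs, hs']
  exact ⟨⟨2 * k * k' + k + k' - (2 * k + 4 * t) * (k' + 2 * t'), by ring⟩,
    ⟨2 * k * k' + 4 * k * t' + 4 * t * k' + t + t' + 4 * t * t', by ring⟩⟩

theorem norm_eq_re_sq_add_im_sq (z : GaussianInt) : z.norm = z.re ^ 2 + z.im ^ 2 := by
  rw [Zsqrtd.norm_def]
  ring

theorem ne_zero_of_isCoprime_re_im {z : GaussianInt} (hz : IsCoprime z.re z.im) : z ≠ 0 := by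
  rintro rfl
  exact not_isCoprime_zero_zero hz

theorem prime_dvd_norm_of_dvd_re_mul {p : ℤ} (hp : Prime p) {w z : GaussianInt}
    (hw : IsCoprime w.re w.im) (hre : p ∣ (w * z).re) (hnorm : p ∣ w.norm) : p ∣ z.norm := by
  have him : ¬p ∣ w.im := fun him ↦ by
    have hre_sq : p ∣ w.re ^ 2 := by
      simpa [norm_eq_re_sq_add_im_sq] using hnorm.sub (dvd_pow him two_ne_zero)
    exact hp.not_isUnit (hw.isUnit_of_dvd' (hp.dvd_of_dvd_pow hre_sq) him)
  -- `w.im * z.im ≡ w.re * z.re` modulo `(w * z).re`, hence `w.im² |z|² ≡ z.re² |w|²`.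
  have key : w.im ^ 2 * z.norm =
      z.re ^ 2 * w.norm + (w * z).re * ((w * z).re - 2 * w.re * z.re) := by
    simp only [norm_eq_re_sq_add_im_sq, Zsqrtd.re_mul]
    ring
  have hdvd : p ∣ w.im ^ 2 * z.norm := key ▸ (hnorm.mul_left _).add (hre.mul_right _)
  exact (hp.dvd_mul.mp hdvd).resolve_left (mt hp.dvd_of_dvd_pow him)

theorem isCoprime_re_mul_norm_of_isCoprime {w z : GaussianInt} (hw : IsCoprime w.re w.im)
    (h : IsCoprime (w * z).re z.norm) : IsCoprime (w * z).re w.norm :=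
  isCoprime_of_prime_dvd (fun h0 ↦ ne_zero_of_isCoprime_re_im hw (norm_eq_zero.mp h0.2))
    fun _ hp hre hnorm ↦
      hp.not_isUnit (h.isUnit_of_dvd' hre (prime_dvd_norm_of_dvd_re_mul hp hw hre hnorm))

theorem isCoprime_re_mul_norm_iff {w z : GaussianInt} (hw : IsCoprime w.re w.im)
    (hz : IsCoprime z.re z.im) :
    IsCoprime (w * z).re w.norm ↔ IsCoprime (w * z).re z.norm := by
  refine ⟨fun h ↦ ?_, isCoprime_re_mul_norm_of_isCoprime hw⟩
  rw [mul_comm] at h ⊢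
  exact isCoprime_re_mul_norm_of_isCoprime hz h

theorem gcd_natAbs_norm_eq_one_iff (a : ℤ) (z : GaussianInt) :
    a.gcd (z.norm.natAbs : ℤ) = 1 ↔ IsCoprime a z.norm := by
  rw [abs_natCast_norm, Int.isCoprime_iff_gcd_eq_one]

end GaussianInt

/-- Reciprocity for the Dirichlet symbol `(z/w) := (Re(wz) / |w|²)` (Jacobi symbol):
for `w, z` primary and primitive, `(z/w) = (w/z)`. -/
theorem stmt14 (w z : GaussianInt)
    (hw : GaussianInt.IsPrimary w) (hz : GaussianInt.IsPrimary z)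
    (hwprim : Int.gcd w.re w.im = 1) (hzprim : Int.gcd z.re z.im = 1) :
    jacobiSym ((w * z).re) (w.norm.natAbs) = jacobiSym ((z * w).re) (z.norm.natAbs) := by
  rw [mul_comm z w]
  have hwc := Int.isCoprime_iff_gcd_eq_one.mpr hwprim
  have hzc := Int.isCoprime_iff_gcd_eq_one.mpr hzprim
  have hN : w.norm.natAbs ≠ 0 := by simpa using GaussianInt.ne_zero_of_isCoprime_re_im hwc
  have hM : z.norm.natAbs ≠ 0 := by simpa using GaussianInt.ne_zero_of_isCoprime_re_im hzc
  have hNM : ((w.norm.natAbs * z.norm.natAbs : ℕ) : ℤ) = w.norm * z.norm := by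
    rw [Nat.cast_mul, GaussianInt.abs_natCast_norm, GaussianInt.abs_natCast_norm]
  by_cases hcop : IsCoprime (w * z).re w.norm
  · have hcop' := (GaussianInt.isCoprime_re_mul_norm_iff hwc hzc).mp hcop
    have hprod :
        jacobiSym (w * z).re w.norm.natAbs * jacobiSym (w * z).re z.norm.natAbs = 1 := by
      rw [← jacobiSym.mul_right' _ hN hM]
      refine jacobiSym_eq_one_of_sq_add_sq (hw.mul hz).1 (hw.mul hz).even_im ?_ ?_
      · rw [hNM, ← Zsqrtd.norm_mul, GaussianInt.norm_eq_re_sq_add_im_sq]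
      · exact hNM ▸ hcop.mul_right hcop'
    rcases Int.eq_one_or_neg_one_of_mul_eq_one' hprod with ⟨h₁, h₂⟩ | ⟨h₁, h₂⟩ <;> rw [h₁, h₂]
  · have hcop' := mt (GaussianInt.isCoprime_re_mul_norm_iff hwc hzc).mpr hcop
    rw [jacobiSym.eq_zero_iff.mpr ⟨hN, by rwa [Ne, GaussianInt.gcd_natAbs_norm_eq_one_iff]⟩,
      jacobiSym.eq_zero_iff.mpr ⟨hM, by rwa [Ne, GaussianInt.gcd_natAbs_norm_eq_one_iff]⟩]
end

section
/- Let w be primary primitive in ℤ[i] with q = |w|². Then for all Gaussian integers z, (z/w)·(z/w̄) = χ_q(|z|²), i.e., the product of the Dirichlet symbols at w and its conjugate equals the Jacobi symbol (|z|²/q). -/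
/-- For `w` primary primitive with `q = |w|²` and all Gaussian integers `z`:
`(z/w)(z/w̄) = (|z|²/q)`, products of Dirichlet symbols giving the Jacobi symbol. -/
theorem stmt15 (w : GaussianInt) (hw : GaussianInt.IsPrimary w)
    (hwprim : Int.gcd w.re w.im = 1) (z : GaussianInt) :
    jacobiSym ((w * z).re) (w.norm.natAbs) * jacobiSym (((star w) * z).re) (w.norm.natAbs)
      = jacobiSym (z.norm) (w.norm.natAbs) := by
  set q : ℕ := w.norm.natAbs with hqdef
  have hnorm : w.norm = w.re * w.re + w.im * w.im := by
    simp [Zsqrtd.norm]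
  have hq : (q : ℤ) = w.norm := Int.natAbs_of_nonneg (Zsqrtd.norm_nonneg (by norm_num) w)
  -- key congruence
  have key : ((w * z).re * ((star w) * z).re) % (q : ℤ) = (w.re ^ 2 * z.norm) % (q : ℤ) := by
    have hdvd : (q : ℤ) ∣ (w.re ^ 2 * z.norm - (w * z).re * ((star w) * z).re) := by
      rw [hq]
      have : w.re ^ 2 * z.norm - (w * z).re * ((star w) * z).re = z.im ^ 2 * w.norm := by
        simp [Zsqrtd.norm, Zsqrtd.re_mul, Zsqrtd.re_star, Zsqrtd.im_star]
        ring
      rw [this]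
      exact Dvd.intro_left _ rfl
    exact (Int.modEq_iff_dvd.mpr hdvd)
  -- coprimality of w.re with q
  have hco : IsCoprime (w.re : ℤ) w.im := Int.isCoprime_iff_gcd_eq_one.mpr hwprim
  have hco2 : IsCoprime (w.re : ℤ) w.norm := by
    rw [hnorm, add_comm]
    exact (hco.mul_right hco).add_mul_left_right w.re
  have hgcd : Int.gcd w.re (q : ℤ) = 1 := by
    rw [hq]
    exact Int.isCoprime_iff_gcd_eq_one.mp hco2
  have hgcd' : Int.gcd w.re q = 1 := by
    simpa [Int.gcd] using hgcd
  rw [← jacobiSym.mul_left, jacobiSym.mod_left' key, jacobiSym.mul_left,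
    jacobiSym.sq_one' hgcd', one_mul]
end

section
/- Let ℓ = p₁p₂⋯p_t be squarefree with p₁ > p₂ > ⋯ > p_t, fix r ≥ 2, and define the separation divisor 𝔡(ℓ) = p₁⋯p_r · p_{2r} · p_{3r} ⋯ (indices that exist). Then 𝔡(ℓ) ≤ ℓ^(1/r) · p₁^(r−1). -/
/-!
Pad the decreasing list of primes of `ℓ` with `1`s to `k` blocks of length `r`.
The first block is taken whole, and `(p₁⋯p_r)^r ≤ p₁^{r(r-1)} · p₁⋯p_r`.
Every later block contributes only its last entry, whose `r`-th power is at most the product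
of the whole block because the sequence decreases. Multiplying over the blocks gives
`𝔡(ℓ)^r ≤ p₁^{r(r-1)} · ℓ`.
-/

/-- The separation divisor `𝔡(ℓ)` of a squarefree `ℓ = p₁⋯p_t` (primes decreasing):
the product of `p_j` over indices `j` with `j ≤ r` or `r ∣ j`,
i.e. `𝔡 = p₁⋯p_r p_{2r} p_{3r} ⋯`. -/
def sepDiv (r ℓ : ℕ) : ℕ :=
  ∏ i ∈ Finset.range ℓ.primeFactorsList.reverse.length,
    if i + 1 ≤ r ∨ r ∣ (i + 1) then ℓ.primeFactorsList.reverse.getD i 1 else 1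

open Finset

theorem List.antitone_getD {α : Type*} [Preorder α] {l : List α} (hl : l.SortedGE) {d : α}
    (hd : ∀ x ∈ l, d ≤ x) : Antitone (l.getD · d) := by
  intro i j hij
  dsimp only
  by_cases hj : j < l.length
  · rw [getD_eq_getElem _ _ hj, getD_eq_getElem _ _ (hij.trans_lt hj)]
    exact hl.getElem_ge_getElem_of_le hij
  · rw [getD_eq_default _ _ (not_lt.mp hj)]
    by_cases hi : i < l.length
    · rw [getD_eq_getElem _ _ hi]
      exact hd _ (getElem_mem hi)
    · rw [getD_eq_default _ _ (not_lt.mp hi)]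

theorem List.prod_range_getD {M : Type*} [CommMonoid M] (l : List M) {n : ℕ} (hn : l.length ≤ n) :
    ∏ i ∈ Finset.range n, l.getD i 1 = l.prod := by
  rw [← prod_subset (range_subset_range.mpr hn)
    fun i _ hi => getD_eq_default _ _ (not_lt.mp (Finset.mem_range.not.mp hi)), Finset.prod_range]
  conv_rhs => rw [← ofFn_getElem (xs := l), prod_ofFn]
  exact prod_congr rfl fun i _ => getD_eq_getElem _ _ i.isLt

section SepProd

variable {M : Type*} [CommMonoid M]

def sepProd (r : ℕ) (q : ℕ → M) (n : ℕ) : M :=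
  ∏ i ∈ range n, if i + 1 ≤ r ∨ r ∣ i + 1 then q i else 1

theorem sepProd_eq_of_le (r : ℕ) {q : ℕ → M} {n N : ℕ} (hnN : n ≤ N)
    (hq : ∀ i, n ≤ i → q i = 1) : sepProd r q N = sepProd r q n := by
  refine (prod_subset (range_subset_range.mpr hnN) fun i _ hi => ?_).symm
  simp [hq i (not_lt.mp (mem_range.not.mp hi))]

theorem sepProd_self (r : ℕ) (q : ℕ → M) : sepProd r q r = ∏ i ∈ range r, q i :=
  prod_congr rfl fun _ hi => if_pos (Or.inl (mem_range.mp hi))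

theorem sepProd_mul_add_self {r k : ℕ} (hr : 0 < r) (hk : 0 < k) (q : ℕ → M) :
    sepProd r q (r * k + r) = sepProd r q (r * k) * q (r * k + (r - 1)) := by
  have hsel : ∀ i ∈ range r, (r * k + i + 1 ≤ r ∨ r ∣ r * k + i + 1) ↔ i = r - 1 := by
    intro i hi
    have hir : i < r := mem_range.mp hi
    have hrk : r ≤ r * k := Nat.le_mul_of_pos_right r hk
    rw [add_assoc, Nat.dvd_add_right (dvd_mul_right r k)]
    constructor
    · rintro (h | h)
      · omega
      · have := Nat.le_of_dvd (Nat.succ_pos i) h; omega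
    · intro h; right; rw [h, Nat.sub_add_cancel hr]
  rw [sepProd, prod_range_add, prod_congr rfl fun i hi => if_congr (hsel i hi) rfl rfl,
    prod_ite_eq', if_pos (mem_range.mpr (Nat.sub_lt hr one_pos))]
  rfl

variable [Preorder M] [MulLeftMono M]

theorem sepProd_pow_le {q : ℕ → M} (hq : Antitone q) {r : ℕ} (hr : 0 < r) {k : ℕ} (hk : 0 < k) :
    sepProd r q (r * k) ^ r ≤ q 0 ^ (r * (r - 1)) * ∏ i ∈ range (r * k), q i := by
  induction k, hk using Nat.le_induction with
  | base =>
    have hhead : ∏ i ∈ range r, q i ≤ q 0 ^ r := by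
      simpa using prod_le_pow_card (range r) q (q 0) fun i _ => hq (Nat.zero_le i)
    calc sepProd r q (r * 1) ^ r = (∏ i ∈ range r, q i) ^ (r - 1) * ∏ i ∈ range r, q i := by
          rw [mul_one, sepProd_self, ← pow_succ, Nat.sub_add_cancel hr]
      _ ≤ (q 0 ^ r) ^ (r - 1) * ∏ i ∈ range r, q i := by gcongr
      _ = q 0 ^ (r * (r - 1)) * ∏ i ∈ range (r * 1), q i := by rw [← pow_mul, mul_one]
  | succ k hk ih =>
    have hblock : q (r * k + (r - 1)) ^ r ≤ ∏ i ∈ range r, q (r * k + i) := by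
      simpa using pow_card_le_prod (range r) _ _ fun i hi =>
        hq (Nat.add_le_add_left (Nat.le_sub_one_of_lt (mem_range.mp hi)) _)
    calc sepProd r q (r * (k + 1)) ^ r
        = sepProd r q (r * k) ^ r * q (r * k + (r - 1)) ^ r := by
          rw [mul_add_one, sepProd_mul_add_self hr hk, mul_pow]
      _ ≤ (q 0 ^ (r * (r - 1)) * ∏ i ∈ range (r * k), q i) * ∏ i ∈ range r, q (r * k + i) :=
          mul_le_mul' ih hblock
      _ = q 0 ^ (r * (r - 1)) * ∏ i ∈ range (r * (k + 1)), q i := by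
          rw [mul_add_one, prod_range_add, mul_assoc]

end SepProd

/-- For squarefree `ℓ` and `r ≥ 2`: `𝔡(ℓ)^r ≤ ℓ · p₁^{r(r-1)}`,
i.e. `𝔡(ℓ) ≤ ℓ^{1/r} p₁^{r-1}` where `p₁` is the largest prime factor of `ℓ`. -/
theorem stmt19 (r : ℕ) (hr : 2 ≤ r) (ℓ : ℕ) (hℓ : Squarefree ℓ) :
    sepDiv r ℓ ^ r ≤ ℓ * (ℓ.primeFactorsList.reverse.getD 0 1) ^ (r * (r - 1)) := by
  set L := ℓ.primeFactorsList.reverse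
  have hL : L.SortedGE := List.sortedGE_reverse.mpr (Nat.primeFactorsList_sorted ℓ)
  have hL1 : ∀ p ∈ L, 1 ≤ p := fun p hp =>
    (Nat.prime_of_mem_primeFactorsList (List.mem_reverse.mp hp)).one_lt.le
  have hlen : L.length ≤ r * (L.length + 1) := by nlinarith
  calc sepDiv r ℓ ^ r = sepProd r (L.getD · 1) (r * (L.length + 1)) ^ r := by
        rw [sepProd_eq_of_le r hlen fun i hi => L.getD_eq_default 1 hi]; rfl
    _ ≤ L.getD 0 1 ^ (r * (r - 1)) * ∏ i ∈ range (r * (L.length + 1)), L.getD i 1 :=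
        sepProd_pow_le (L.antitone_getD hL hL1) (by omega) (Nat.succ_pos _)
    _ = ℓ * L.getD 0 1 ^ (r * (r - 1)) := by
        rw [L.prod_range_getD hlen, List.prod_reverse, Nat.prod_primeFactorsList hℓ.ne_zero,
          mul_comm]
end
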